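/- arXiv:1603.05126 — 7 statements merged into one kernel-verified Lean document; each statement's English description precedes it below -/
import Mathlib

section
/- There exists a constant C > 0 such that for all (c,a) ∈ ℂ², |G(c,a) − log⁺ max{|a|, |c|}| ≤ C. -/
/-! With `m = max(1, |a|, |c|)` and `R = 6m`, one has `|P w| ≤ max(|w|, R)³` everywhere and
`|P w| ≥ |w|³/6` once `|w| ≥ R`. The first bound makes `3⁻ⁿ log max(R, |Pⁿ z|)` decrease, so it
converges, to the same limit `g(z)` as `3⁻ⁿ log⁺ |Pⁿ z|`, and it gives `g ≤ log R` on the disc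
`|z| ≤ R`, which contains both critical points. The second bound gives `g(w) ≥ log |w| - (log 6)/2`
outside that disc. Since `P 0 = a³` and `P c = a³ - c³/6`, one critical value has modulus at least
`m³/12`, which lies outside the disc once `m ≥ 12`; then `g(z) = g(P z)/3` yields
`g ≥ log m - log 12` at the corresponding critical point. -/

open Filter

/-- The cubic polynomial `P_{c,a}(z) = z³/3 − (c/2)z² + a³`. -/
noncomputable def P (c a z : ℂ) : ℂ := z ^ 3 / 3 - c / 2 * z ^ 2 + a ^ 3

section DivPow

variable {u : ℕ → ℝ} {d : ℝ}

lemma antitone_div_pow_of_le_mul (hd : 0 < d) (h : ∀ n, u (n + 1) ≤ d * u n) :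
    Antitone fun n => u n / d ^ n := by
  refine antitone_nat_of_succ_le fun n => ?_
  rw [pow_succ', ← div_div, div_le_div_iff_of_pos_right (pow_pos hd n), div_le_iff₀ hd,
    mul_comm]
  exact h n

lemma sub_le_div_pow_of_mul_sub_le (hd : 1 < d) {K : ℝ} (hK : 0 ≤ K)
    (h : ∀ n, d * u n - K ≤ u (n + 1)) (n : ℕ) : u 0 - K / (d - 1) ≤ u n / d ^ n := by
  set s := K / (d - 1)
  have hs : (d - 1) * s = K := mul_div_cancel₀ K (sub_pos.2 hd).ne'
  -- `u n - s` grows at least geometrically with ratio `d`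
  have key : ∀ n, d ^ n * (u 0 - s) ≤ u n - s := by
    intro n
    induction n with
    | zero => simp
    | succ n ih =>
      calc d ^ (n + 1) * (u 0 - s) = d * (d ^ n * (u 0 - s)) := by ring
        _ ≤ d * (u n - s) := by gcongr
        _ ≤ u (n + 1) - s := by linarith [h n]
  have hdn : 0 < d ^ n := pow_pos (by linarith) n
  rw [le_div_iff₀ hdn]
  nlinarith [key n, one_le_pow₀ hd.le (n := n), div_nonneg hK (sub_pos.2 hd).le]

end DivPow

namespace CubicGreen

variable (c a : ℂ)

lemma norm_P_crit_ge :
    max ‖a‖ ‖c‖ ^ 3 / 12 ≤ max ‖P c a 0‖ ‖P c a c‖ := by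
  have hP0 : P c a 0 = a ^ 3 := by simp [P]
  have hPc : P c a c = a ^ 3 - c ^ 3 / 6 := by simp only [P]; ring
  rcases le_or_gt (max ‖a‖ ‖c‖ ^ 3 / 12) (‖a‖ ^ 3) with ha | ha
  · exact le_max_of_le_left (by rwa [hP0, norm_pow])
  · have hc : max ‖a‖ ‖c‖ = ‖c‖ := by
      refine max_eq_right (not_lt.1 fun hca => ?_)
      rw [max_eq_left hca.le] at ha
      nlinarith [pow_nonneg (norm_nonneg a) 3]
    refine le_max_of_le_right ?_
    have := norm_sub_norm_le (c ^ 3 / 6) (a ^ 3)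
    rw [hPc, norm_sub_rev]
    simp only [norm_div, norm_pow, RCLike.norm_ofNat] at this
    rw [hc] at ha ⊢
    linarith

noncomputable def scale : ℝ := max 1 (max ‖a‖ ‖c‖)

lemma one_le_scale : 1 ≤ scale c a := le_max_left _ _

lemma norm_le_scale_left : ‖a‖ ≤ scale c a := (le_max_left _ _).trans (le_max_right _ _)

lemma norm_le_scale_right : ‖c‖ ≤ scale c a := (le_max_right _ _).trans (le_max_right _ _)

lemma norm_P_le_add (w : ℂ) : ‖P c a w‖ ≤ ‖w‖ ^ 3 / 3 + ‖c‖ / 2 * ‖w‖ ^ 2 + ‖a‖ ^ 3 := by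
  refine (norm_add_le _ _).trans ?_
  have := norm_sub_le (w ^ 3 / 3) (c / 2 * w ^ 2)
  simp only [norm_div, norm_mul, norm_pow, RCLike.norm_ofNat] at this ⊢
  linarith

lemma norm_P_le (w : ℂ) : ‖P c a w‖ ≤ max ‖w‖ (6 * scale c a) ^ 3 := by
  set r := max ‖w‖ (6 * scale c a)
  have hm : 6 * scale c a ≤ r := le_max_right _ _
  have hm1 := one_le_scale c a
  calc ‖P c a w‖ ≤ ‖w‖ ^ 3 / 3 + ‖c‖ / 2 * ‖w‖ ^ 2 + ‖a‖ ^ 3 := norm_P_le_add c a w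
    _ ≤ r ^ 3 / 3 + scale c a / 2 * r ^ 2 + scale c a ^ 3 := by
      gcongr
      · exact le_max_left _ _
      · exact norm_le_scale_right c a
      · exact le_max_left _ _
      · exact norm_le_scale_left c a
    _ ≤ r ^ 3 := by
      nlinarith [mul_le_mul_of_nonneg_right hm (sq_nonneg r),
        pow_le_pow_left₀ (by positivity) hm 3]

lemma norm_P_ge {w : ℂ} (hw : 6 * scale c a ≤ ‖w‖) : ‖w‖ ^ 3 / 6 ≤ ‖P c a w‖ := by
  have hm1 := one_le_scale c a
  have hlow : ‖w‖ ^ 3 / 3 - ‖c‖ / 2 * ‖w‖ ^ 2 - ‖a‖ ^ 3 ≤ ‖P c a w‖ := by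
    have h1 := norm_sub_norm_le (w ^ 3 / 3) (c / 2 * w ^ 2 - a ^ 3)
    have h2 := norm_sub_le (c / 2 * w ^ 2) (a ^ 3)
    rw [show w ^ 3 / 3 - (c / 2 * w ^ 2 - a ^ 3) = P c a w by simp only [P]; ring] at h1
    simp only [norm_div, norm_mul, norm_pow, RCLike.norm_ofNat] at h1 h2
    linarith
  have hc : ‖c‖ / 2 * ‖w‖ ^ 2 ≤ scale c a / 2 * ‖w‖ ^ 2 := by
    gcongr; exact norm_le_scale_right c a
  have ha : ‖a‖ ^ 3 ≤ scale c a ^ 3 := by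
    gcongr; exact norm_le_scale_left c a
  nlinarith [mul_le_mul_of_nonneg_right hw (sq_nonneg ‖w‖),
    pow_le_pow_left₀ (by positivity) hw 3]

lemma le_norm_P {w : ℂ} (hw : 6 * scale c a ≤ ‖w‖) : 6 * scale c a ≤ ‖P c a w‖ := by
  have hm1 := one_le_scale c a
  refine hw.trans (le_trans ?_ (norm_P_ge c a hw))
  nlinarith [mul_le_mul_of_nonneg_right hw (mul_nonneg (norm_nonneg w) (norm_nonneg w))]

-- `log max(R, ‖w‖)` with the escape radius `R = 6 · scale c a`: unlike `log⁺ ‖w‖`, it satisfies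
-- `cutLog (P w) ≤ 3 · cutLog w` everywhere.
noncomputable def cutLog (w : ℂ) : ℝ := Real.log (max (6 * scale c a) ‖w‖)

lemma one_le_six_mul_scale : 1 ≤ 6 * scale c a := by linarith [one_le_scale c a]

lemma cutLog_nonneg (w : ℂ) : 0 ≤ cutLog c a w :=
  Real.log_nonneg (le_max_of_le_left (one_le_six_mul_scale c a))

lemma cutLog_P_le (w : ℂ) : cutLog c a (P c a w) ≤ 3 * cutLog c a w := by
  have hR := one_le_six_mul_scale c a
  have hbound : max (6 * scale c a) ‖P c a w‖ ≤ max (6 * scale c a) ‖w‖ ^ 3 := by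
    refine max_le ?_ (max_comm ‖w‖ _ ▸ norm_P_le c a w)
    exact (le_self_pow₀ hR three_ne_zero).trans
      (pow_le_pow_left₀ (by positivity) (le_max_left _ _) 3)
  have := Real.log_le_log (by positivity) hbound
  rwa [Real.log_pow, Nat.cast_ofNat] at this

lemma cutLog_P_ge {w : ℂ} (hw : 6 * scale c a ≤ ‖w‖) :
    3 * cutLog c a w - Real.log 6 ≤ cutLog c a (P c a w) := by
  have hw0 : 0 < ‖w‖ := by linarith [one_le_six_mul_scale c a]
  calc 3 * cutLog c a w - Real.log 6 = Real.log (‖w‖ ^ 3 / 6) := by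
        rw [cutLog, max_eq_right hw, Real.log_div (by positivity) (by norm_num), Real.log_pow]
        norm_num
    _ ≤ Real.log ‖P c a w‖ := Real.log_le_log (by positivity) (norm_P_ge c a hw)
    _ ≤ cutLog c a (P c a w) :=
      Real.log_le_log (by linarith [le_norm_P c a hw, one_le_six_mul_scale c a])
        (le_max_right _ _)

lemma le_norm_iterate_P {w : ℂ} (hw : 6 * scale c a ≤ ‖w‖) (n : ℕ) :
    6 * scale c a ≤ ‖(P c a)^[n] w‖ := by
  induction n with
  | zero => exact hw
  | succ n ih => rw [Function.iterate_succ_apply']; exact le_norm_P c a ih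

-- The Green function `g_{c,a}`, as the limit of the decreasing sequence `3⁻ⁿ cutLog (Pⁿ z)`.
noncomputable def green (z : ℂ) : ℝ := ⨅ n : ℕ, cutLog c a ((P c a)^[n] z) / 3 ^ n

lemma antitone_cutLog_iterate (z : ℂ) :
    Antitone fun n : ℕ => cutLog c a ((P c a)^[n] z) / 3 ^ n :=
  antitone_div_pow_of_le_mul three_pos fun n => by
    rw [Function.iterate_succ_apply']; exact cutLog_P_le c a _

lemma bddBelow_cutLog_iterate (z : ℂ) :
    BddBelow (Set.range fun n : ℕ => cutLog c a ((P c a)^[n] z) / 3 ^ n) :=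
  ⟨0, Set.forall_mem_range.2 fun n => div_nonneg (cutLog_nonneg c a _) (by positivity)⟩

lemma tendsto_green (z : ℂ) :
    Tendsto (fun n : ℕ => cutLog c a ((P c a)^[n] z) / 3 ^ n) atTop (nhds (green c a z)) :=
  tendsto_atTop_ciInf (antitone_cutLog_iterate c a z) (bddBelow_cutLog_iterate c a z)

lemma green_nonneg (z : ℂ) : 0 ≤ green c a z :=
  le_ciInf fun n => div_nonneg (cutLog_nonneg c a _) (by positivity)

lemma green_le_cutLog (z : ℂ) : green c a z ≤ cutLog c a z :=
  (ciInf_le (bddBelow_cutLog_iterate c a z) 0).trans_eq (by simp)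

lemma green_P (z : ℂ) : green c a (P c a z) = 3 * green c a z := by
  refine tendsto_nhds_unique (tendsto_green c a (P c a z)) ?_
  convert ((tendsto_green c a z).comp (tendsto_add_atTop_nat 1)).const_mul 3 using 1
  ext n
  simp only [Function.comp_apply, Function.iterate_succ_apply, pow_succ]
  field_simp

lemma cutLog_sub_le_green {z : ℂ} (hz : 6 * scale c a ≤ ‖z‖) :
    cutLog c a z - Real.log 6 / 2 ≤ green c a z := by
  refine le_ciInf fun n => ?_
  have := sub_le_div_pow_of_mul_sub_le (u := fun n => cutLog c a ((P c a)^[n] z))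
    (by norm_num : (1 : ℝ) < 3) (Real.log_nonneg (by norm_num : (1 : ℝ) ≤ 6)) (fun n => by
      simp only [Function.iterate_succ_apply']
      exact cutLog_P_ge c a (le_norm_iterate_P c a hz n)) n
  norm_num at this
  linarith

lemma tendsto_log_max_one_green (z : ℂ) :
    Tendsto (fun n : ℕ => Real.log (max 1 ‖(P c a)^[n] z‖) / 3 ^ n) atTop
      (nhds (green c a z)) := by
  have hR := one_le_six_mul_scale c a
  have hlim : Tendsto (fun n : ℕ => cutLog c a ((P c a)^[n] z) / 3 ^ n
      - Real.log (6 * scale c a) / 3 ^ n) atTop (nhds (green c a z)) := by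
    simpa using (tendsto_green c a z).sub (tendsto_const_nhds.div_atTop
      (tendsto_pow_atTop_atTop_of_one_lt (by norm_num : (1 : ℝ) < 3)))
  refine tendsto_of_tendsto_of_tendsto_of_le_of_le hlim (tendsto_green c a z) (fun n => ?_)
    (fun n => ?_)
  · rw [← sub_div]
    gcongr
    rw [cutLog, sub_le_iff_le_add, ← Real.log_mul (by positivity) (by positivity)]
    set x := ‖(P c a)^[n] z‖
    have hx : 1 ≤ max 1 x := le_max_left _ _
    exact Real.log_le_log (by positivity)
      (max_le (by nlinarith) (by nlinarith [le_max_right 1 x]))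
  · gcongr
    exact Real.log_le_log (by positivity) (max_le_max hR le_rfl)

lemma green_le_log_six_add {z : ℂ} (hz : ‖z‖ ≤ 6 * scale c a) :
    green c a z ≤ Real.log 6 + Real.log (scale c a) := by
  have := green_le_cutLog c a z
  rwa [cutLog, max_eq_left hz, Real.log_mul (by norm_num) (by linarith [one_le_scale c a])]
    at this

lemma log_scale_sub_le_green {z : ℂ} (hm : 12 ≤ scale c a)
    (hz : scale c a ^ 3 / 12 ≤ ‖P c a z‖) :
    Real.log (scale c a) - Real.log 12 ≤ green c a z := by
  set m := scale c a
  have hR : 6 * m ≤ ‖P c a z‖ := by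
    have hm2 : 144 ≤ m * m := by nlinarith
    nlinarith [mul_le_mul_of_nonneg_left hm2 (by linarith : 0 ≤ m)]
  have hlog : 3 * Real.log m - Real.log 12 ≤ Real.log ‖P c a z‖ := by
    have := Real.log_le_log (by positivity) hz
    rwa [Real.log_div (by positivity) (by norm_num), Real.log_pow, Nat.cast_ofNat] at this
  have hgreen := cutLog_sub_le_green c a hR
  rw [cutLog, max_eq_right hR, green_P] at hgreen
  have h6 : Real.log 6 ≤ Real.log 12 := Real.log_le_log (by norm_num) (by norm_num)
  have h12 : 0 ≤ Real.log 12 := Real.log_nonneg (by norm_num)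
  linarith

lemma log_scale_sub_le_max_green :
    Real.log (scale c a) - Real.log 12 ≤ max (green c a 0) (green c a c) := by
  rcases lt_or_ge (scale c a) 12 with hm | hm
  · have := Real.log_lt_log (by linarith [one_le_scale c a]) hm
    linarith [le_max_left (green c a 0) (green c a c), green_nonneg c a 0]
  · have hM : scale c a = max ‖a‖ ‖c‖ := by
      refine max_eq_right (le_of_not_gt fun h => ?_)
      rw [scale, max_eq_left h.le] at hm
      norm_num at hm
    have hcrit := norm_P_crit_ge c a
    rw [← hM, le_max_iff] at hcrit
    rcases hcrit with h | h
    · exact le_max_of_le_left (log_scale_sub_le_green c a hm h)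
    · exact le_max_of_le_right (log_scale_sub_le_green c a hm h)

end CubicGreen

open CubicGreen in
/-- There is a constant `C > 0` such that for all `(c,a) ∈ ℂ²`,
`|G(c,a) − log⁺ max{|a|,|c|}| ≤ C`, where `G(c,a) = max{g₀(c,a), g₁(c,a)}` and
`g₀(c,a)`, `g₁(c,a)` are the limits of `3⁻ⁿ log⁺ |P_{c,a}ⁿ(cᵢ)|` at the critical
points `c₀ = 0` and `c₁ = c` (the limits exist). -/
theorem stmt1 :
    ∃ C : ℝ, 0 < C ∧ ∀ c a : ℂ, ∃ g0 g1 : ℝ,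
      Tendsto (fun n : ℕ =>
          Real.log (max 1 (‖(P c a)^[n] 0‖)) / 3 ^ n) atTop (nhds g0) ∧
      Tendsto (fun n : ℕ =>
          Real.log (max 1 (‖(P c a)^[n] c‖)) / 3 ^ n) atTop (nhds g1) ∧
      |max g0 g1 - Real.log (max 1 (max ‖a‖ ‖c‖))| ≤ C := by
  refine ⟨Real.log 12, Real.log_pos (by norm_num), fun c a => ⟨green c a 0, green c a c,
    tendsto_log_max_one_green c a 0, tendsto_log_max_one_green c a c, ?_⟩⟩
  have hR := one_le_six_mul_scale c a
  have h0 := green_le_log_six_add c a (z := 0) (by rw [norm_zero]; linarith)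
  have hc := green_le_log_six_add c a (z := c) (by linarith [norm_le_scale_right c a])
  have hlow := log_scale_sub_le_max_green c a
  have h6 : Real.log 6 ≤ Real.log 12 := Real.log_le_log (by norm_num) (by norm_num)
  change |_ - Real.log (scale c a)| ≤ _
  rw [abs_le]
  constructor
  · linarith
  · linarith [max_le h0 hc]
end

section
/- Let K be a field of characteristic zero, complete with respect to a nontrivial nonarchimedean absolute value |·| satisfying |2| = |3| = 1 (i.e., the residual characteristic is not 2 or 3). Then for all (c,a) ∈ K², the limit g_{c,a}(z) = lim_{n→∞} 3^{−n} log⁺|P_{c,a}^n(z)| exists for every z ∈ K and max{g_{c,a}(0), g_{c,a}(c)} = log⁺ max{|c|, |a|}. -/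
open Filter

section Aux

variable {K : Type*} [NormedField K]

lemma iso_lem (hna : IsNonarchimedean (fun x : K => ‖x‖)) {x y : K}
    (h : ‖y‖ < ‖x‖) : ‖x + y‖ = ‖x‖ := by
  refine le_antisymm ((hna x y).trans (max_le le_rfl h.le)) ?_
  have h1 : ‖x‖ ≤ max ‖x + y‖ ‖y‖ := by
    have := hna (x + y) (-y)
    simpa using this
  rcases le_max_iff.mp h1 with h' | h'
  · exact h'
  · linarith

lemma escape_step (hna : IsNonarchimedean (fun x : K => ‖x‖))
    (h2 : ‖(2 : K)‖ = 1) (h3 : ‖(3 : K)‖ = 1) (c a : K)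
    {w : K} (hw : max 1 (max ‖c‖ ‖a‖) < ‖w‖) :
    ‖w ^ 3 / 3 - c / 2 * w ^ 2 + a ^ 3‖ = ‖w‖ ^ 3 := by
  have h1 : (1 : ℝ) < ‖w‖ := lt_of_le_of_lt (le_max_left _ _) hw
  have hc : ‖c‖ < ‖w‖ := lt_of_le_of_lt ((le_max_left _ _).trans (le_max_right _ _)) hw
  have ha : ‖a‖ < ‖w‖ := lt_of_le_of_lt ((le_max_right _ _).trans (le_max_right _ _)) hw
  have e1 : ‖w ^ 3 / 3‖ = ‖w‖ ^ 3 := by rw [norm_div, h3, norm_pow, div_one]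
  have e2 : ‖c / 2 * w ^ 2‖ = ‖c‖ * ‖w‖ ^ 2 := by
    rw [norm_mul, norm_div, h2, norm_pow, div_one]
  have key : ‖-(c / 2 * w ^ 2) + a ^ 3‖ < ‖w ^ 3 / 3‖ := by
    rw [e1]
    refine lt_of_le_of_lt (hna _ _) (max_lt ?_ ?_)
    · show ‖-(c / 2 * w ^ 2)‖ < ‖w‖ ^ 3
      rw [norm_neg, e2]
      have hw2 : (0 : ℝ) < ‖w‖ ^ 2 := by positivity
      nlinarith
    · show ‖a ^ 3‖ < ‖w‖ ^ 3
      rw [norm_pow]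
      exact pow_lt_pow_left₀ ha (norm_nonneg a) (by norm_num)
  have hexpr : w ^ 3 / 3 - c / 2 * w ^ 2 + a ^ 3
      = w ^ 3 / 3 + (-(c / 2 * w ^ 2) + a ^ 3) := by ring
  rw [hexpr, iso_lem hna key, e1]

lemma step_bound (hna : IsNonarchimedean (fun x : K => ‖x‖))
    (h2 : ‖(2 : K)‖ = 1) (h3 : ‖(3 : K)‖ = 1) {c a w : K} {s : ℝ}
    (hs1 : 1 ≤ s) (hc : ‖c‖ ≤ s) (ha : ‖a‖ ≤ s) (hw : ‖w‖ ≤ s) :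
    ‖w ^ 3 / 3 - c / 2 * w ^ 2 + a ^ 3‖ ≤ s ^ 3 := by
  have e1 : ‖w ^ 3 / 3‖ = ‖w‖ ^ 3 := by rw [norm_div, h3, norm_pow, div_one]
  have e2 : ‖c / 2 * w ^ 2‖ = ‖c‖ * ‖w‖ ^ 2 := by
    rw [norm_mul, norm_div, h2, norm_pow, div_one]
  have hw0 := norm_nonneg w
  have hc0 := norm_nonneg c
  have ha0 := norm_nonneg a
  have b1 : ‖w ^ 3 / 3‖ ≤ s ^ 3 := by rw [e1]; exact pow_le_pow_left₀ hw0 hw 3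
  have b2 : ‖c / 2 * w ^ 2‖ ≤ s ^ 3 := by
    rw [e2]
    calc ‖c‖ * ‖w‖ ^ 2 ≤ s * s ^ 2 :=
          mul_le_mul hc (pow_le_pow_left₀ hw0 hw 2) (by positivity) (hc0.trans hc)
      _ = s ^ 3 := by ring
  have b3 : ‖a ^ 3‖ ≤ s ^ 3 := by rw [norm_pow]; exact pow_le_pow_left₀ ha0 ha 3
  calc ‖w ^ 3 / 3 - c / 2 * w ^ 2 + a ^ 3‖
      ≤ max ‖w ^ 3 / 3 - c / 2 * w ^ 2‖ ‖a ^ 3‖ := hna _ _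
    _ ≤ max (max ‖w ^ 3 / 3‖ ‖c / 2 * w ^ 2‖) ‖a ^ 3‖ := by
        refine max_le_max ?_ le_rfl
        have := hna (w ^ 3 / 3) (-(c / 2 * w ^ 2))
        simpa [sub_eq_add_neg] using this
    _ ≤ s ^ 3 := by
        exact max_le (max_le b1 b2) b3


lemma escape_iter (hna : IsNonarchimedean (fun x : K => ‖x‖))
    (h2 : ‖(2 : K)‖ = 1) (h3 : ‖(3 : K)‖ = 1) (c a : K)
    {w : K} (hw : max 1 (max ‖c‖ ‖a‖) < ‖w‖) :
    ∀ k : ℕ, ‖(fun w : K => w ^ 3 / 3 - c / 2 * w ^ 2 + a ^ 3)^[k] w‖ = ‖w‖ ^ (3 ^ k) := by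
  intro k
  induction k with
  | zero => simp
  | succ k ih =>
    have h1 : (1 : ℝ) < ‖w‖ := lt_of_le_of_lt (le_max_left _ _) hw
    have hk : max 1 (max ‖c‖ ‖a‖) <
        ‖(fun w : K => w ^ 3 / 3 - c / 2 * w ^ 2 + a ^ 3)^[k] w‖ := by
      rw [ih]
      exact lt_of_lt_of_le hw (le_self_pow₀ h1.le (by positivity))
    rw [Function.iterate_succ_apply', escape_step hna h2 h3 c a hk, ih, ← pow_mul,
      pow_succ]

lemma lim_escape (hna : IsNonarchimedean (fun x : K => ‖x‖))
    (h2 : ‖(2 : K)‖ = 1) (h3 : ‖(3 : K)‖ = 1) (c a : K) (z : K) (N : ℕ)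
    (h : max 1 (max ‖c‖ ‖a‖) < ‖(fun w : K => w ^ 3 / 3 - c / 2 * w ^ 2 + a ^ 3)^[N] z‖) :
    Tendsto (fun n : ℕ =>
        Real.log (max 1 ‖(fun w : K => w ^ 3 / 3 - c / 2 * w ^ 2 + a ^ 3)^[n] z‖) / 3 ^ n)
      atTop (nhds (Real.log ‖(fun w : K => w ^ 3 / 3 - c / 2 * w ^ 2 + a ^ 3)^[N] z‖ / 3 ^ N)) := by
  set P : K → K := fun w : K => w ^ 3 / 3 - c / 2 * w ^ 2 + a ^ 3 with hP
  set b : ℝ := ‖P^[N] z‖ with hb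
  have hb1 : (1 : ℝ) < b := lt_of_le_of_lt (le_max_left _ _) h
  refine Tendsto.congr' ?_ (tendsto_const_nhds (x := Real.log b / 3 ^ N))
  rw [EventuallyEq, eventually_atTop]
  refine ⟨N, fun n hn => ?_⟩
  obtain ⟨k, rfl⟩ := Nat.exists_eq_add_of_le hn
  have key : ‖P^[N + k] z‖ = b ^ (3 ^ k) := by
    rw [add_comm, Function.iterate_add_apply]
    exact escape_iter hna h2 h3 c a h k
  have hbk : (1 : ℝ) ≤ b ^ (3 ^ k) := one_le_pow₀ hb1.le
  rw [key, max_eq_right hbk, Real.log_pow]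
  rw [pow_add]
  push_cast
  field_simp

lemma lim_bounded (c a : K) (z : K)
    (h : ∀ n : ℕ, ‖(fun w : K => w ^ 3 / 3 - c / 2 * w ^ 2 + a ^ 3)^[n] z‖
      ≤ max 1 (max ‖c‖ ‖a‖)) :
    Tendsto (fun n : ℕ =>
        Real.log (max 1 ‖(fun w : K => w ^ 3 / 3 - c / 2 * w ^ 2 + a ^ 3)^[n] z‖) / 3 ^ n)
      atTop (nhds 0) := by
  set P : K → K := fun w : K => w ^ 3 / 3 - c / 2 * w ^ 2 + a ^ 3 with hP
  set R : ℝ := max 1 (max ‖c‖ ‖a‖) with hR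
  have hR1 : (1 : ℝ) ≤ R := le_max_left _ _
  refine squeeze_zero (g := fun n : ℕ => Real.log R / 3 ^ n) (fun n => ?_) (fun n => ?_) ?_
  · have h1 : (1 : ℝ) ≤ max 1 ‖P^[n] z‖ := le_max_left _ _
    have h2 : (0 : ℝ) ≤ Real.log (max 1 ‖P^[n] z‖) := Real.log_nonneg h1
    positivity
  · have h1 : max 1 ‖P^[n] z‖ ≤ R := max_le hR1 (h n)
    have h2 : Real.log (max 1 ‖P^[n] z‖) ≤ Real.log R :=
      Real.log_le_log (by positivity) h1
    exact div_le_div_of_nonneg_right h2 (by positivity) |>.trans_eq rfl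
  · exact Tendsto.div_atTop tendsto_const_nhds
      (tendsto_pow_atTop_atTop_of_one_lt (by norm_num : (1:ℝ) < 3))


lemma growth (hna : IsNonarchimedean (fun x : K => ‖x‖))
    (h2 : ‖(2 : K)‖ = 1) (h3 : ‖(3 : K)‖ = 1) {c a z : K}
    (hr : 1 ≤ max ‖c‖ ‖a‖) (hz : ‖z‖ ≤ max ‖c‖ ‖a‖) :
    ∀ n : ℕ, ‖(fun w : K => w ^ 3 / 3 - c / 2 * w ^ 2 + a ^ 3)^[n] z‖
      ≤ (max ‖c‖ ‖a‖) ^ 3 ^ n := by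
  intro n
  induction n with
  | zero => simpa using hz
  | succ n ih =>
    rw [Function.iterate_succ_apply']
    have hs1 : (1 : ℝ) ≤ (max ‖c‖ ‖a‖) ^ 3 ^ n := one_le_pow₀ hr
    have hrs : max ‖c‖ ‖a‖ ≤ (max ‖c‖ ‖a‖) ^ 3 ^ n :=
      le_self_pow₀ hr (by positivity)
    have := step_bound hna h2 h3 (c := c) (a := a) hs1
      ((le_max_left _ _).trans hrs) ((le_max_right _ _).trans hrs) ih
    calc _ ≤ ((max ‖c‖ ‖a‖) ^ 3 ^ n) ^ 3 := this
      _ = (max ‖c‖ ‖a‖) ^ 3 ^ (n + 1) := by rw [← pow_mul, pow_succ]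

end Aux

/-- Over a complete nonarchimedean field `K` of characteristic zero whose (multiplicative,
nontrivial) absolute value satisfies `|2| = |3| = 1`, the Green function
`g_{c,a}(z) = lim 3⁻ⁿ log⁺ |P_{c,a}ⁿ(z)|` exists for every `z ∈ K`, and
`max{g_{c,a}(0), g_{c,a}(c)} = log⁺ max{|c|, |a|}`, where
`P_{c,a}(z) = z³/3 − (c/2)z² + a³`. -/
theorem stmt2 (K : Type*) [NormedField K] [CompleteSpace K] [CharZero K]
    (hna : IsNonarchimedean (fun x : K => ‖x‖))
    (hnontriv : ∃ x : K, ‖x‖ ≠ 0 ∧ ‖x‖ ≠ 1)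
    (h2 : ‖(2 : K)‖ = 1) (h3 : ‖(3 : K)‖ = 1)
    (c a : K) :
    (∀ z : K, ∃ g : ℝ,
      Tendsto (fun n : ℕ =>
          Real.log (max 1 ‖(fun w : K => w ^ 3 / 3 - c / 2 * w ^ 2 + a ^ 3)^[n] z‖) / 3 ^ n)
        atTop (nhds g)) ∧
    ∃ g0 g1 : ℝ,
      Tendsto (fun n : ℕ =>
          Real.log (max 1 ‖(fun w : K => w ^ 3 / 3 - c / 2 * w ^ 2 + a ^ 3)^[n] (0 : K)‖) / 3 ^ n)
        atTop (nhds g0) ∧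
      Tendsto (fun n : ℕ =>
          Real.log (max 1 ‖(fun w : K => w ^ 3 / 3 - c / 2 * w ^ 2 + a ^ 3)^[n] c‖) / 3 ^ n)
        atTop (nhds g1) ∧
      max g0 g1 = Real.log (max 1 (max ‖c‖ ‖a‖)) := by
  have part1 : ∀ z : K, ∃ g : ℝ,
      Tendsto (fun n : ℕ =>
          Real.log (max 1 ‖(fun w : K => w ^ 3 / 3 - c / 2 * w ^ 2 + a ^ 3)^[n] z‖) / 3 ^ n)
        atTop (nhds g) := by
    intro z
    by_cases hcase : ∃ N : ℕ, max 1 (max ‖c‖ ‖a‖) <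
        ‖(fun w : K => w ^ 3 / 3 - c / 2 * w ^ 2 + a ^ 3)^[N] z‖
    · obtain ⟨N, hN⟩ := hcase
      exact ⟨_, lim_escape hna h2 h3 c a z N hN⟩
    · push_neg at hcase
      exact ⟨0, lim_bounded c a z hcase⟩
  refine ⟨part1, ?_⟩
  by_cases hr1 : max ‖c‖ ‖a‖ ≤ 1
  · -- bounded case: both Green values are 0
    have hbdd : ∀ z : K, ‖z‖ ≤ 1 → ∀ n : ℕ,
        ‖(fun w : K => w ^ 3 / 3 - c / 2 * w ^ 2 + a ^ 3)^[n] z‖ ≤ 1 := by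
      intro z hz n
      induction n with
      | zero => simpa using hz
      | succ n ih =>
        rw [Function.iterate_succ_apply']
        have := step_bound hna h2 h3 (c := c) (a := a) le_rfl
          ((le_max_left _ _).trans hr1) ((le_max_right _ _).trans hr1) ih
        simpa using this
    have hc1 : ‖c‖ ≤ 1 := (le_max_left _ _).trans hr1
    refine ⟨0, 0, ?_, ?_, ?_⟩
    · exact lim_bounded c a 0 fun n => (hbdd 0 (by simp) n).trans (le_max_left _ _)
    · exact lim_bounded c a c fun n => (hbdd c hc1 n).trans (le_max_left _ _)
    · rw [max_self, max_eq_left hr1, Real.log_one]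
  · push_neg at hr1
    have hRr : max 1 (max ‖c‖ ‖a‖) = max ‖c‖ ‖a‖ := max_eq_right hr1.le
    have hub : ∀ z : K, ‖z‖ ≤ max ‖c‖ ‖a‖ → ∀ g : ℝ,
        Tendsto (fun n : ℕ =>
            Real.log (max 1 ‖(fun w : K => w ^ 3 / 3 - c / 2 * w ^ 2 + a ^ 3)^[n] z‖) / 3 ^ n)
          atTop (nhds g) → g ≤ Real.log (max ‖c‖ ‖a‖) := by
      intro z hz g hg
      refine le_of_tendsto hg (Eventually.of_forall fun n => ?_)
      have hb : max 1 ‖(fun w : K => w ^ 3 / 3 - c / 2 * w ^ 2 + a ^ 3)^[n] z‖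
          ≤ (max ‖c‖ ‖a‖) ^ 3 ^ n :=
        max_le (one_le_pow₀ hr1.le) (growth hna h2 h3 hr1.le hz n)
      have hlog := Real.log_le_log (by positivity) hb
      rw [Real.log_pow] at hlog
      rw [div_le_iff₀ (by positivity : (0:ℝ) < (3:ℝ) ^ n)]
      calc Real.log (max 1 ‖(fun w : K => w ^ 3 / 3 - c / 2 * w ^ 2 + a ^ 3)^[n] z‖)
          ≤ (3 ^ n : ℕ) * Real.log (max ‖c‖ ‖a‖) := hlog
        _ = Real.log (max ‖c‖ ‖a‖) * 3 ^ n := by push_cast; ring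
    by_cases hca : ‖c‖ ≤ ‖a‖
    · -- r = ‖a‖, orbit of 0 escapes at the first step
      have hra : max ‖c‖ ‖a‖ = ‖a‖ := max_eq_right hca
      have hP0 : (fun w : K => w ^ 3 / 3 - c / 2 * w ^ 2 + a ^ 3)^[1] (0 : K) = a ^ 3 := by
        simp
      have ha1 : (1 : ℝ) < ‖a‖ := by rw [hra] at hr1; exact hr1
      have hesc : max 1 (max ‖c‖ ‖a‖) <
          ‖(fun w : K => w ^ 3 / 3 - c / 2 * w ^ 2 + a ^ 3)^[1] (0 : K)‖ := by
        rw [hP0, norm_pow, hRr, hra]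
        calc ‖a‖ = ‖a‖ ^ 1 := (pow_one _).symm
          _ < ‖a‖ ^ 3 := pow_lt_pow_right₀ ha1 (by norm_num)
      have hg0 := lim_escape hna h2 h3 c a 0 1 hesc
      have hval : Real.log ‖(fun w : K => w ^ 3 / 3 - c / 2 * w ^ 2 + a ^ 3)^[1] (0 : K)‖
          / (3 : ℝ) ^ 1 = Real.log (max ‖c‖ ‖a‖) := by
        rw [hP0, norm_pow, hra, Real.log_pow]
        push_cast; ring
      obtain ⟨g1, hg1⟩ := part1 c
      refine ⟨Real.log (max ‖c‖ ‖a‖), g1, ?_, hg1, ?_⟩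
      · rw [← hval]; exact hg0
      · have hle : g1 ≤ Real.log (max ‖c‖ ‖a‖) := hub c (le_max_left _ _) g1 hg1
        rw [max_eq_left hle, hRr]
    · -- r = ‖c‖ > ‖a‖, orbit of c escapes at the first step
      push_neg at hca
      have hrc : max ‖c‖ ‖a‖ = ‖c‖ := max_eq_left hca.le
      have hc1 : (1 : ℝ) < ‖c‖ := by rw [hrc] at hr1; exact hr1
      have hPc : (fun w : K => w ^ 3 / 3 - c / 2 * w ^ 2 + a ^ 3)^[1] c
          = -(c ^ 3 / 6) + a ^ 3 := by
        rw [Function.iterate_one]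
        ring
      have h6 : ‖(6 : K)‖ = 1 := by
        have : (6 : K) = 2 * 3 := by norm_num
        rw [this, norm_mul, h2, h3, one_mul]
      have hnc : ‖-(c ^ 3 / 6)‖ = ‖c‖ ^ 3 := by
        rw [norm_neg, norm_div, norm_pow, h6, div_one]
      have hlt : ‖a ^ 3‖ < ‖-(c ^ 3 / 6)‖ := by
        rw [hnc, norm_pow]
        exact pow_lt_pow_left₀ hca (norm_nonneg a) (by norm_num)
      have hnPc : ‖(fun w : K => w ^ 3 / 3 - c / 2 * w ^ 2 + a ^ 3)^[1] c‖ = ‖c‖ ^ 3 := by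
        rw [hPc, iso_lem hna hlt, hnc]
      have hesc : max 1 (max ‖c‖ ‖a‖) <
          ‖(fun w : K => w ^ 3 / 3 - c / 2 * w ^ 2 + a ^ 3)^[1] c‖ := by
        rw [hnPc, hRr, hrc]
        calc ‖c‖ = ‖c‖ ^ 1 := (pow_one _).symm
          _ < ‖c‖ ^ 3 := pow_lt_pow_right₀ hc1 (by norm_num)
      have hg1 := lim_escape hna h2 h3 c a c 1 hesc
      have hval : Real.log ‖(fun w : K => w ^ 3 / 3 - c / 2 * w ^ 2 + a ^ 3)^[1] c‖
          / (3 : ℝ) ^ 1 = Real.log (max ‖c‖ ‖a‖) := by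
        rw [hnPc, hrc, Real.log_pow]
        push_cast; ring
      obtain ⟨g0, hg0⟩ := part1 0
      refine ⟨g0, Real.log (max ‖c‖ ‖a‖), hg0, ?_, ?_⟩
      · rw [← hval]; exact hg1
      · have hle : g0 ≤ Real.log (max ‖c‖ ‖a‖) := hub 0 (by rw [norm_zero]; positivity) g0 hg0
        rw [max_eq_right hle, hRr]
end

section
/- Fix ω = 1/√3 ∈ ℂ. For every (c,a) ∈ ℂ² there exist R > 0 and an injective holomorphic function φ on {z ∈ ℂ : |z| > R} such that |P_{c,a}(z)| > R and φ(P_{c,a}(z)) = φ(z)³ for all |z| > R, and φ(z) − ω(z − c/2) → 0 as |z| → ∞. Moreover φ is unique near infinity: any holomorphic ψ defined on {|z| > R'} for some R' ≥ R satisfying ψ(P_{c,a}(z)) = ψ(z)³ and ψ(z) − ω(z − c/2) → 0 as |z| → ∞ coincides with φ on {|z| > R''} for some R'' ≥ R'. -/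
open Filter

/-!
Write `P(z) - c/2 = (z - c/2)³ / 3 · r(z)` with `r(z) = 1 + O(|z|⁻²)`. Then
`φ(z) = ω (z - c/2) exp (∑ₙ 3^{-(n+1)} log r(Pⁿ z))`: the series converges since `|Pⁿ z| ≥ |z|`,
and the shifted series satisfies `S(P z) = 3 S(z) - log r(z)`, which together with `3 ω³ = ω`
gives `φ(P z) = φ(z)³`.

Injectivity and uniqueness both come from one principle: a quantity that at least doubles under
`P` and stays bounded along orbits vanishes. It is applied to `|z₁ - z₂|` when `φ z₁ = φ z₂`
(`P` expands short distances near `∞`, and `φ ≈ ω (z - c/2)` keeps such orbits within distance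
`1`), and to `|ψ/φ - 1|` (the cube map doubles distances to `1` near `1`).
-/

theorem nonpos_of_two_mul_le_comp {α : Type*} {f : α → α} {s : Set α} {g : α → ℝ} {ε : ℝ}
    (hf : Set.MapsTo f s s) (hbdd : ∀ x ∈ s, g x ≤ ε) (hexp : ∀ x ∈ s, 2 * g x ≤ g (f x))
    {x : α} (hx : x ∈ s) : g x ≤ 0 := by
  have hpow : ∀ n : ℕ, 2 ^ n * g x ≤ g (f^[n] x) := by
    intro n
    induction n with
    | zero => simp
    | succ n ih =>
      rw [Function.iterate_succ_apply', pow_succ']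
      linarith [hexp _ (hf.iterate n hx)]
  by_contra! hpos
  obtain ⟨n, hn⟩ := pow_unbounded_of_one_lt (ε / g x) one_lt_two
  rw [div_lt_iff₀ hpos] at hn
  linarith [hpow n, hbdd _ (hf.iterate n hx)]

theorem two_mul_norm_sub_one_le_norm_pow_three_sub_one {u : ℂ} (hu : ‖u - 1‖ ≤ 1 / 4) :
    2 * ‖u - 1‖ ≤ ‖u ^ 3 - 1‖ := by
  set v := u - 1
  have hfactor : u ^ 3 - 1 = v * (3 + (v ^ 2 + 3 * v)) := by ring
  have hsmall : ‖v ^ 2 + 3 * v‖ ≤ 1 := by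
    calc ‖v ^ 2 + 3 * v‖ ≤ ‖v‖ ^ 2 + 3 * ‖v‖ := by
          refine (norm_add_le _ _).trans_eq ?_
          rw [norm_pow, norm_mul, Complex.norm_ofNat]
      _ ≤ 1 := by nlinarith [norm_nonneg v]
  have hfar : 2 ≤ ‖3 + (v ^ 2 + 3 * v)‖ := by
    have := norm_sub_norm_le (3 : ℂ) (-(v ^ 2 + 3 * v))
    rw [norm_neg, sub_neg_eq_add, Complex.norm_ofNat] at this
    linarith
  rw [hfactor, norm_mul]
  nlinarith [norm_nonneg v]

theorem tsum_iterate_comp_eq {α : Type*} (f : α → α) (L : α → ℂ) {z : α}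
    (h : Summable fun n : ℕ => (3 : ℂ)⁻¹ ^ (n + 1) * L (f^[n] z)) :
    ∑' n : ℕ, (3 : ℂ)⁻¹ ^ (n + 1) * L (f^[n] (f z)) =
      3 * ∑' n : ℕ, (3 : ℂ)⁻¹ ^ (n + 1) * L (f^[n] z) - L z := by
  have hshift : ∀ n : ℕ, (3 : ℂ)⁻¹ ^ (n + 1 + 1) * L (f^[n + 1] z) =
      3⁻¹ * ((3 : ℂ)⁻¹ ^ (n + 1) * L (f^[n] (f z))) := by
    intro n
    rw [Function.iterate_succ_apply]
    ring
  rw [h.tsum_eq_zero_add, tsum_congr hshift, tsum_mul_left]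
  simp only [zero_add, pow_one, Function.iterate_zero, id]
  ring

theorem tendsto_zero_of_norm_le_div_norm {E : Type*} [SeminormedAddCommGroup E] {g : ℂ → E}
    {R C : ℝ} (hg : ∀ z : ℂ, R < ‖z‖ → ‖g z‖ ≤ C / ‖z‖) :
    Tendsto g (comap (fun z : ℂ => ‖z‖) atTop) (nhds 0) := by
  have hnorm : Tendsto (fun z : ℂ => ‖z‖) (comap (fun z : ℂ => ‖z‖) atTop) atTop :=
    tendsto_comap
  refine squeeze_zero_norm' ?_ (by simpa using (tendsto_inv_atTop_zero.comp hnorm).const_mul C)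
  filter_upwards [hnorm.eventually_gt_atTop R] with z hz
  exact hg z hz

namespace Bottcher

noncomputable def ω : ℂ := ((Real.sqrt 3 : ℝ) : ℂ)⁻¹

noncomputable def D (c a : ℂ) : ℝ := 1 + ‖c‖ + ‖c‖ ^ 2 + ‖c‖ ^ 3 + ‖a‖ ^ 3

noncomputable def R (c a : ℂ) : ℝ := 300 * D c a

noncomputable def q (c a z : ℂ) : ℂ := a ^ 3 - c / 2 - c ^ 2 / 4 * z + c ^ 3 / 24

noncomputable def r (c a z : ℂ) : ℂ := 3 * (P c a z - c / 2) / (z - c / 2) ^ 3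

lemma three_mul_ω_pow_three : 3 * ω ^ 3 = ω := by
  have hsq : ω ^ 2 = 3⁻¹ := by
    rw [ω, inv_pow, ← Complex.ofReal_pow, Real.sq_sqrt (by norm_num)]
    norm_num
  rw [pow_succ, hsq]
  ring

lemma half_le_norm_ω : 1 / 2 ≤ ‖ω‖ := by
  rw [ω, norm_inv, Complex.norm_real, Real.norm_of_nonneg (Real.sqrt_nonneg 3), one_div]
  refine inv_anti₀ (Real.sqrt_pos.2 (by norm_num)) ?_
  rw [Real.sqrt_le_left (by norm_num)]
  norm_num

lemma norm_ω_le_one : ‖ω‖ ≤ 1 := by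
  rw [ω, norm_inv, Complex.norm_real, Real.norm_of_nonneg (Real.sqrt_nonneg 3)]
  exact inv_le_one_of_one_le₀ (Real.one_le_sqrt.2 (by norm_num))

variable {c a z : ℂ}

lemma one_le_D : 1 ≤ D c a := by
  unfold D; linarith [norm_nonneg c, pow_nonneg (norm_nonneg c) 2,
    pow_nonneg (norm_nonneg c) 3, pow_nonneg (norm_nonneg a) 3]

lemma norm_le_D : ‖c‖ ≤ D c a := by
  unfold D; linarith [pow_nonneg (norm_nonneg c) 2,
    pow_nonneg (norm_nonneg c) 3, pow_nonneg (norm_nonneg a) 3]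

lemma norm_pow_three_le_D : ‖a‖ ^ 3 ≤ D c a := by
  unfold D; linarith [norm_nonneg c, pow_nonneg (norm_nonneg c) 2, pow_nonneg (norm_nonneg c) 3]

lemma three_hundred_le_norm (hz : R c a < ‖z‖) : 300 ≤ ‖z‖ := by
  unfold R at hz; linarith [one_le_D (c := c) (a := a)]

lemma R_pos : 0 < R c a := by
  unfold R; linarith [one_le_D (c := c) (a := a)]

lemma P_sub_half (c a z : ℂ) : P c a z - c / 2 = (z - c / 2) ^ 3 / 3 + q c a z := by
  unfold P q; ring

lemma norm_q_le (hz : 1 ≤ ‖z‖) : ‖q c a z‖ ≤ D c a * ‖z‖ := by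
  have hsum : q c a z = a ^ 3 + -(c / 2) + -(c ^ 2 / 4 * z) + c ^ 3 / 24 := by unfold q; ring
  have htri : ‖a ^ 3 + -(c / 2) + -(c ^ 2 / 4 * z) + c ^ 3 / 24‖ ≤
      ‖a ^ 3‖ + ‖-(c / 2)‖ + ‖-(c ^ 2 / 4 * z)‖ + ‖c ^ 3 / 24‖ := norm_add₄_le
  simp only [norm_neg, norm_div, norm_mul, norm_pow, Complex.norm_ofNat] at htri
  rw [hsum]
  refine htri.trans ?_
  unfold D
  have hc := norm_nonneg c
  nlinarith [pow_nonneg hc 2, pow_nonneg hc 3, pow_nonneg (norm_nonneg a) 3]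

lemma norm_sub_half_bounds (hz : R c a < ‖z‖) :
    ‖z‖ / 2 ≤ ‖z - c / 2‖ ∧ ‖z - c / 2‖ ≤ 3 / 2 * ‖z‖ := by
  have hc : ‖c‖ ≤ ‖z‖ := by
    unfold R at hz; linarith [norm_le_D (c := c) (a := a), one_le_D (c := c) (a := a)]
  have hhalf : ‖c / 2‖ = ‖c‖ / 2 := by rw [norm_div, Complex.norm_ofNat]
  constructor
  · linarith [norm_sub_norm_le z (c / 2)]
  · linarith [norm_sub_le z (c / 2)]

lemma sub_half_ne_zero (hz : R c a < ‖z‖) : z - c / 2 ≠ 0 :=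
  norm_pos_iff.1 (by linarith [(norm_sub_half_bounds hz).1, three_hundred_le_norm hz])

lemma norm_r_sub_one_le (hz : R c a < ‖z‖) : ‖r c a z - 1‖ ≤ 24 * D c a / ‖z‖ ^ 2 := by
  have hz300 := three_hundred_le_norm hz
  have hlow := (norm_sub_half_bounds hz).1
  have hne := sub_half_ne_zero hz
  have hr : r c a z - 1 = 3 * q c a z / (z - c / 2) ^ 3 := by
    rw [eq_div_iff (pow_ne_zero 3 hne), r, P_sub_half, sub_mul,
      div_mul_cancel₀ _ (pow_ne_zero 3 hne)]
    ring
  rw [hr, norm_div, norm_mul, norm_pow, Complex.norm_ofNat,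
    div_le_div_iff₀ (pow_pos (by linarith) 3) (by positivity)]
  have hq := norm_q_le (c := c) (a := a) (by linarith : 1 ≤ ‖z‖)
  have hcube : (‖z‖ / 2) ^ 3 ≤ ‖z - c / 2‖ ^ 3 := by gcongr
  have hD := one_le_D (c := c) (a := a)
  calc 3 * ‖q c a z‖ * ‖z‖ ^ 2 ≤ 3 * (D c a * ‖z‖) * ‖z‖ ^ 2 := by gcongr
    _ = 24 * D c a * (‖z‖ / 2) ^ 3 := by ring
    _ ≤ 24 * D c a * ‖z - c / 2‖ ^ 3 := by gcongr

lemma D_div_sq_le (hz : R c a < ‖z‖) : D c a / ‖z‖ ^ 2 ≤ 1 / 90000 := by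
  have hz300 := three_hundred_le_norm hz
  unfold R at hz
  rw [div_le_iff₀ (by positivity)]
  nlinarith

lemma norm_r_sub_one_le_half (hz : R c a < ‖z‖) : ‖r c a z - 1‖ ≤ 1 / 2 := by
  have := D_div_sq_le hz
  have := norm_r_sub_one_le hz
  rw [mul_div_assoc] at this
  linarith

lemma r_mem_slitPlane (hz : R c a < ‖z‖) : r c a z ∈ Complex.slitPlane := by
  refine Complex.mem_slitPlane_iff.2 (Or.inl ?_)
  have h := (Complex.abs_re_le_norm (r c a z - 1)).trans (norm_r_sub_one_le_half hz)
  rw [Complex.sub_re, Complex.one_re] at h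
  linarith [(abs_le.1 h).1]

lemma norm_log_r_le (hz : R c a < ‖z‖) :
    ‖Complex.log (r c a z)‖ ≤ 36 * D c a / ‖z‖ ^ 2 := by
  have h := Complex.norm_log_one_add_half_le_self (norm_r_sub_one_le_half hz)
  rw [add_sub_cancel] at h
  calc ‖Complex.log (r c a z)‖ ≤ 3 / 2 * (24 * D c a / ‖z‖ ^ 2) :=
        h.trans (by gcongr; exact norm_r_sub_one_le hz)
    _ = 36 * D c a / ‖z‖ ^ 2 := by ring

lemma two_mul_norm_le_norm_P (hz : R c a < ‖z‖) : 2 * ‖z‖ ≤ ‖P c a z‖ := by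
  have hz300 := three_hundred_le_norm hz
  have hc : 300 * ‖c‖ ≤ ‖z‖ := by unfold R at hz; linarith [norm_le_D (c := c) (a := a)]
  have ha : 300 * ‖a‖ ^ 3 ≤ ‖z‖ := by
    unfold R at hz; linarith [norm_pow_three_le_D (c := c) (a := a)]
  have hsplit : P c a z = z ^ 3 / 3 - (c / 2 * z ^ 2 - a ^ 3) := by unfold P; ring
  have hrest : ‖c / 2 * z ^ 2 - a ^ 3‖ ≤ ‖c‖ / 2 * ‖z‖ ^ 2 + ‖a‖ ^ 3 := by
    refine (norm_sub_le _ _).trans_eq ?_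
    rw [norm_mul, norm_div, norm_pow, norm_pow, Complex.norm_ofNat]
  have hmain := norm_sub_norm_le (z ^ 3 / 3) (c / 2 * z ^ 2 - a ^ 3)
  rw [norm_div, norm_pow, Complex.norm_ofNat, ← hsplit] at hmain
  nlinarith [mul_le_mul_of_nonneg_right hc (sq_nonneg ‖z‖)]

lemma norm_lt_norm_P (hz : R c a < ‖z‖) : ‖z‖ < ‖P c a z‖ := by
  linarith [two_mul_norm_le_norm_P hz, three_hundred_le_norm hz]

lemma mapsTo_P : Set.MapsTo (P c a) {z | R c a < ‖z‖} {z | R c a < ‖z‖} :=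
  fun _ hz => hz.trans (norm_lt_norm_P hz)

lemma norm_le_norm_iterate_P (hz : R c a < ‖z‖) (n : ℕ) : ‖z‖ ≤ ‖(P c a)^[n] z‖ := by
  induction n with
  | zero => rfl
  | succ n ih =>
    rw [Function.iterate_succ_apply']
    exact ih.trans (norm_lt_norm_P (mapsTo_P.iterate n hz)).le

noncomputable def S (c a z : ℂ) : ℂ :=
  ∑' n : ℕ, (3 : ℂ)⁻¹ ^ (n + 1) * Complex.log (r c a ((P c a)^[n] z))

noncomputable def φ (c a z : ℂ) : ℂ := ω * (z - c / 2) * Complex.exp (S c a z)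

lemma norm_S_term_le {ρ : ℝ} (hρ : 0 < ρ) (hz : R c a < ‖z‖) (hρz : ρ ≤ ‖z‖) (n : ℕ) :
    ‖(3 : ℂ)⁻¹ ^ (n + 1) * Complex.log (r c a ((P c a)^[n] z))‖ ≤
      (3 : ℝ)⁻¹ ^ (n + 1) * (36 * D c a / ρ ^ 2) := by
  rw [norm_mul, norm_pow, norm_inv, Complex.norm_ofNat]
  gcongr
  refine (norm_log_r_le (mapsTo_P.iterate n hz)).trans ?_
  have := one_le_D (c := c) (a := a)
  gcongr
  exact hρz.trans (norm_le_norm_iterate_P hz n)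

lemma summable_geometric_three_inv_succ :
    Summable fun n : ℕ => (3 : ℝ)⁻¹ ^ (n + 1) :=
  (summable_geometric_of_lt_one (by norm_num) (by norm_num)).comp_injective (add_left_injective 1)

lemma summable_S_term (hz : R c a < ‖z‖) :
    Summable fun n : ℕ => (3 : ℂ)⁻¹ ^ (n + 1) * Complex.log (r c a ((P c a)^[n] z)) :=
  .of_norm_bounded (summable_geometric_three_inv_succ.mul_right _)
    (norm_S_term_le (by linarith [three_hundred_le_norm hz]) hz le_rfl)

lemma norm_S_le (hz : R c a < ‖z‖) : ‖S c a z‖ ≤ 18 * D c a / ‖z‖ ^ 2 := by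
  have hsum : ∑' n : ℕ, (3 : ℝ)⁻¹ ^ (n + 1) = 2⁻¹ := by
    simp_rw [pow_succ]
    rw [tsum_mul_right, tsum_geometric_of_lt_one (by norm_num) (by norm_num)]
    norm_num
  calc ‖S c a z‖ ≤ ∑' n : ℕ, (3 : ℝ)⁻¹ ^ (n + 1) * (36 * D c a / ‖z‖ ^ 2) :=
        tsum_of_norm_bounded (summable_geometric_three_inv_succ.mul_right _).hasSum
          (norm_S_term_le (by linarith [three_hundred_le_norm hz]) hz le_rfl)
    _ = 18 * D c a / ‖z‖ ^ 2 := by rw [tsum_mul_right, hsum]; ring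

lemma S_P (hz : R c a < ‖z‖) : S c a (P c a z) = 3 * S c a z - Complex.log (r c a z) :=
  tsum_iterate_comp_eq (P c a) (fun w => Complex.log (r c a w)) (summable_S_term hz)

lemma φ_P (hz : R c a < ‖z‖) : φ c a (P c a z) = φ c a z ^ 3 := by
  have hne : (z - c / 2) ^ 3 ≠ 0 := pow_ne_zero 3 (sub_half_ne_zero hz)
  have hr : r c a z ≠ 0 := Complex.slitPlane_ne_zero (r_mem_slitPlane hz)
  have hP : P c a z - c / 2 = (z - c / 2) ^ 3 * r c a z / 3 := by
    rw [r, mul_div_left_comm, div_self hne, mul_one, mul_div_cancel_left₀ _ three_ne_zero]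
  rw [φ, φ, S_P hz, Complex.exp_sub, Complex.exp_log hr, hP,
    show 3 * S c a z = ((3 : ℕ) : ℂ) * S c a z by norm_num, Complex.exp_nat_mul]
  field_simp
  linear_combination -(z * 2 - c) ^ 3 * three_mul_ω_pow_three

lemma norm_φ_sub_le (hz : R c a < ‖z‖) : ‖φ c a z - ω * (z - c / 2)‖ ≤ 54 * D c a / ‖z‖ := by
  have hz0 : 0 < ‖z‖ := by linarith [three_hundred_le_norm hz]
  have hS := norm_S_le hz
  have hS_le_one : ‖S c a z‖ ≤ 1 := hS.trans (by rw [mul_div_assoc]; linarith [D_div_sq_le hz])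
  have hexp : ‖Complex.exp (S c a z) - 1‖ ≤ 2 * (18 * D c a / ‖z‖ ^ 2) :=
    (Complex.norm_exp_sub_one_le hS_le_one).trans (by gcongr)
  calc ‖φ c a z - ω * (z - c / 2)‖ = ‖ω‖ * ‖z - c / 2‖ * ‖Complex.exp (S c a z) - 1‖ := by
        rw [φ, ← mul_sub_one, norm_mul, norm_mul]
    _ ≤ 1 * (3 / 2 * ‖z‖) * (2 * (18 * D c a / ‖z‖ ^ 2)) := by
        gcongr
        · exact norm_ω_le_one
        · exact (norm_sub_half_bounds hz).2
    _ = 54 * D c a / ‖z‖ := by field_simp; ring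

lemma tendsto_φ_sub :
    Tendsto (fun z => φ c a z - ω * (z - c / 2)) (comap (fun z : ℂ => ‖z‖) atTop) (nhds 0) :=
  tendsto_zero_of_norm_le_div_norm fun _ hz => norm_φ_sub_le hz

lemma norm_φ_sub_le_quarter (hz : R c a < ‖z‖) : ‖φ c a z - ω * (z - c / 2)‖ ≤ 1 / 4 := by
  refine (norm_φ_sub_le hz).trans ?_
  have := three_hundred_le_norm hz
  unfold R at hz
  rw [div_le_iff₀ (by linarith)]
  linarith

lemma four_le_norm_φ (hz : R c a < ‖z‖) : 4 ≤ ‖φ c a z‖ := by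
  have hlin : ‖z‖ / 4 ≤ ‖ω * (z - c / 2)‖ := by
    rw [norm_mul]
    nlinarith [half_le_norm_ω, (norm_sub_half_bounds hz).1, norm_nonneg z]
  have htri := norm_sub_norm_le (ω * (z - c / 2)) (φ c a z)
  rw [norm_sub_rev] at htri
  linarith [norm_φ_sub_le_quarter hz, three_hundred_le_norm hz]

lemma differentiable_P : Differentiable ℂ (P c a) := by
  unfold P; fun_prop

lemma differentiableAt_r (hz : R c a < ‖z‖) : DifferentiableAt ℂ (r c a) z := by
  unfold r
  exact (((differentiable_P z).sub_const _).const_mul _).div (by fun_prop)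
    (pow_ne_zero 3 (sub_half_ne_zero hz))

lemma differentiableOn_S : DifferentiableOn ℂ (S c a) {z | R c a < ‖z‖} := by
  refine Complex.differentiableOn_tsum_of_summable_norm
    (summable_geometric_three_inv_succ.mul_right (36 * D c a / R c a ^ 2)) (fun n w hw => ?_)
    (isOpen_lt continuous_const continuous_norm) (fun n w hw => norm_S_term_le R_pos hw hw.le n)
  have hPn : R c a < ‖(P c a)^[n] w‖ := mapsTo_P.iterate n hw
  have hlog : DifferentiableAt ℂ (fun w => Complex.log (r c a ((P c a)^[n] w))) w :=
    (Complex.differentiableAt_log (r_mem_slitPlane hPn)).comp (f := r c a ∘ (P c a)^[n]) w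
      ((differentiableAt_r hPn).comp w (differentiable_P.iterate n w))
  exact (hlog.const_mul _).differentiableWithinAt

lemma differentiableOn_φ : DifferentiableOn ℂ (φ c a) {z | R c a < ‖z‖} :=
  ((differentiable_const ω).mul (differentiable_id.sub_const _)).differentiableOn.mul
    differentiableOn_S.cexp

lemma two_mul_norm_sub_le_norm_P_sub {z₁ z₂ : ℂ} (h₁ : R c a < ‖z₁‖) (hd : ‖z₁ - z₂‖ ≤ 1) :
    2 * ‖z₁ - z₂‖ ≤ ‖P c a z₁ - P c a z₂‖ := by
  set d := z₂ - z₁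
  have hd' : ‖d‖ ≤ 1 := by rwa [norm_sub_rev]
  have h300 := three_hundred_le_norm h₁
  have hc : 300 * ‖c‖ ≤ ‖z₁‖ := by unfold R at h₁; linarith [norm_le_D (c := c) (a := a)]
  set E := -(z₁ * d) + -(d ^ 2 / 3) + c * z₁ + c * d / 2
  have hfactor : P c a z₁ - P c a z₂ = (z₁ - z₂) * (z₁ ^ 2 - E) := by
    have : z₂ = z₁ + d := by ring
    rw [this]; unfold P; ring
  have hE : ‖E‖ ≤ ‖z₁‖ * ‖d‖ + ‖d‖ ^ 2 / 3 + ‖c‖ * ‖z₁‖ + ‖c‖ * ‖d‖ / 2 := by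
    refine norm_add₄_le.trans_eq ?_
    simp only [norm_neg, norm_mul, norm_div, norm_pow, Complex.norm_ofNat]
  have hB : 2 ≤ ‖z₁ ^ 2 - E‖ := by
    have := norm_sub_norm_le (z₁ ^ 2) E
    rw [norm_pow] at this
    nlinarith [norm_nonneg d, norm_nonneg c, mul_le_mul_of_nonneg_left hd' (norm_nonneg z₁),
      mul_le_mul_of_nonneg_left hd' (norm_nonneg c)]
  rw [hfactor, norm_mul]
  nlinarith [norm_nonneg (z₁ - z₂)]

lemma norm_sub_le_one_of_φ_eq {z₁ z₂ : ℂ} (h₁ : R c a < ‖z₁‖) (h₂ : R c a < ‖z₂‖)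
    (heq : φ c a z₁ = φ c a z₂) : ‖z₁ - z₂‖ ≤ 1 := by
  have hsplit : ω * (z₁ - z₂) =
      -(φ c a z₁ - ω * (z₁ - c / 2)) + (φ c a z₂ - ω * (z₂ - c / 2)) := by
    rw [heq]; ring
  have hnorm : ‖ω‖ * ‖z₁ - z₂‖ ≤ 1 / 2 := by
    rw [← norm_mul, hsplit]
    refine (norm_add_le _ _).trans ?_
    rw [norm_neg]
    linarith [norm_φ_sub_le_quarter h₁, norm_φ_sub_le_quarter h₂]
  nlinarith [half_le_norm_ω, norm_nonneg (z₁ - z₂)]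

lemma injOn_φ : Set.InjOn (φ c a) {z | R c a < ‖z‖} := by
  intro z₁ h₁ z₂ h₂ heq
  let s : Set (ℂ × ℂ) := {p | R c a < ‖p.1‖ ∧ R c a < ‖p.2‖ ∧ φ c a p.1 = φ c a p.2}
  have hmaps : Set.MapsTo (Prod.map (P c a) (P c a)) s s := fun p ⟨hp₁, hp₂, hp⟩ =>
    ⟨mapsTo_P hp₁, mapsTo_P hp₂, by simp only [Prod.map, φ_P hp₁, φ_P hp₂, hp]⟩
  have hle : ∀ p ∈ s, ‖p.1 - p.2‖ ≤ 1 := fun p ⟨hp₁, hp₂, hp⟩ =>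
    norm_sub_le_one_of_φ_eq hp₁ hp₂ hp
  have hzero := nonpos_of_two_mul_le_comp (g := fun p : ℂ × ℂ => ‖p.1 - p.2‖) hmaps hle
    (fun p hp => two_mul_norm_sub_le_norm_P_sub hp.1 (hle p hp))
    (show (z₁, z₂) ∈ s from ⟨h₁, h₂, heq⟩)
  exact sub_eq_zero.1 (norm_le_zero_iff.1 hzero)

lemma eq_φ_of_map_P_eq_pow_three {ρ : ℝ} (hρ : R c a ≤ ρ) {ψ : ℂ → ℂ}
    (hψ : ∀ z : ℂ, ρ < ‖z‖ → ψ (P c a z) = ψ z ^ 3)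
    (hclose : ∀ z : ℂ, ρ < ‖z‖ → ‖ψ z - φ c a z‖ ≤ 1) (hz : ρ < ‖z‖) : ψ z = φ c a z := by
  have hmaps : Set.MapsTo (P c a) {z | ρ < ‖z‖} {z | ρ < ‖z‖} :=
    fun w hw => hw.trans (norm_lt_norm_P (hρ.trans_lt hw))
  have hquarter : ∀ w ∈ {z | ρ < ‖z‖}, ‖ψ w / φ c a w - 1‖ ≤ 1 / 4 := by
    intro w hw
    have hφ := four_le_norm_φ (hρ.trans_lt hw)
    rw [div_sub_one (norm_pos_iff.1 (by linarith)), norm_div, div_le_iff₀ (by linarith)]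
    linarith [hclose w hw]
  have hzero := nonpos_of_two_mul_le_comp (g := fun w => ‖ψ w / φ c a w - 1‖) hmaps hquarter
    (fun w hw => by
      simp only [hψ w hw, φ_P (hρ.trans_lt hw), ← div_pow]
      exact two_mul_norm_sub_one_le_norm_pow_three_sub_one (hquarter w hw)) hz
  have hφ := four_le_norm_φ (hρ.trans_lt hz)
  rw [← div_eq_one_iff_eq (norm_pos_iff.1 (by linarith)), ← sub_eq_zero]
  exact norm_le_zero_iff.1 hzero

end Bottcher

open Bottcher

/-- Existence and uniqueness (near infinity) of the Böttcher coordinate of `P_{c,a}`: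
an injective holomorphic `φ` on `{|z| > R}` with `φ(P_{c,a}(z)) = φ(z)³`,
`|P_{c,a}(z)| > R` for `|z| > R`, and `φ(z) − ω(z − c/2) → 0` as `|z| → ∞`, where
`ω = 1/√3`. -/
theorem stmt3 (c a : ℂ) :
    ∃ R : ℝ, 0 < R ∧ ∃ φ : ℂ → ℂ,
      Set.InjOn φ {z : ℂ | R < ‖z‖} ∧
      DifferentiableOn ℂ φ {z : ℂ | R < ‖z‖} ∧
      (∀ z : ℂ, R < ‖z‖ →
        R < ‖P c a z‖ ∧ φ (P c a z) = (φ z) ^ 3) ∧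
      Tendsto (fun z : ℂ => φ z - ((Real.sqrt 3 : ℂ))⁻¹ * (z - c / 2))
        (comap (fun z : ℂ => ‖z‖) atTop) (nhds 0) ∧
      ∀ R' : ℝ, R ≤ R' → ∀ ψ : ℂ → ℂ,
        DifferentiableOn ℂ ψ {z : ℂ | R' < ‖z‖} →
        (∀ z : ℂ, R' < ‖z‖ → ψ (P c a z) = (ψ z) ^ 3) →
        Tendsto (fun z : ℂ => ψ z - ((Real.sqrt 3 : ℂ))⁻¹ * (z - c / 2))
          (comap (fun z : ℂ => ‖z‖) atTop) (nhds 0) →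
        ∃ R'' : ℝ, R' ≤ R'' ∧ ∀ z : ℂ, R'' < ‖z‖ → ψ z = φ z := by
  refine ⟨R c a, R_pos, φ c a, injOn_φ, differentiableOn_φ,
    fun z hz => ⟨mapsTo_P hz, φ_P hz⟩, tendsto_φ_sub, ?_⟩
  intro R' hR' ψ _ hψ hψlim
  rw [show ((Real.sqrt 3 : ℂ))⁻¹ = ω from rfl] at hψlim
  have hclose : ∀ᶠ z in comap (fun z : ℂ => ‖z‖) atTop, ‖ψ z - φ c a z‖ ≤ 1 := by
    have hsub := (hψlim.sub (tendsto_φ_sub (c := c) (a := a))).norm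
    simp only [sub_sub_sub_cancel_right, sub_zero, norm_zero] at hsub
    exact hsub.eventually (ge_mem_nhds one_pos)
  obtain ⟨M, -, hM⟩ := (atTop_basis.comap _).eventually_iff.1 hclose
  refine ⟨max R' M, le_max_left _ _, fun z hz => ?_⟩
  refine eq_φ_of_map_P_eq_pow_three (hR'.trans (le_max_left _ _))
    (fun w hw => hψ w ((le_max_left _ _).trans_lt hw)) (fun w hw => hM ?_) hz
  exact (le_max_right R' M).trans hw.le
end

section
/- Let K be an algebraically closed field of characteristic 0, complete with respect to a nontrivial nonarchimedean absolute value |·|. Let d ≥ 2, t ∈ K, and Q(z) = z^d + t, and assume the forward orbit of 0 under Q is finite. Let w ∈ K satisfy Q^k(w) = w for some k ≥ 1 and set λ = (Q^k)'(w) = ∏_{i=0}^{k−1} Q'(Q^i(w)); assume λ ≠ 0. Then: if |d| < 1 then |λ| < 1, and if |d| = 1 then |λ| = 1. -/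
/-!
A point of norm `> max 1 ‖t‖` escapes to infinity under `Q`, so `‖t‖ ≤ 1` (the orbit of `0` is
finite) and the cycle of `w` lies in the closed unit ball, on which `Q` is `1`-Lipschitz.
Hence `‖λ‖ ≤ ‖d‖ ^ k`, which settles the case `‖d‖ < 1`.

If `‖d‖ = 1` but some cycle point has norm `< 1`, let `w'` be one of minimal norm `s`. Near the
cycle `Q` contracts by the factor `s`, and since the orbit of `0` is finite it returns infinitely
often to the same point; this forces `Q^n 0 = Q^n w'` for some `n`. But when `‖d‖ = 1` a
nontrivial `d`-th root of unity `ζ` has `‖ζ - 1‖ = 1`, so `y ^ d = v ^ d` with `y ≠ v` implies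
`‖y - v‖ ≥ ‖v‖`; as `‖Q^n 0 - Q^n w'‖ ≤ ‖Q 0 - Q w'‖ = s ^ d < s` for `n ≥ 1`, the two orbits can
never meet.
-/

open Finset Function

section Ultrametric

variable {K : Type*} [NormedField K] [IsUltrametricDist K]

lemma norm_pow_sub_pow_le (a b : K) (n : ℕ) {M : ℝ} (ha : ‖a‖ ≤ M) (hb : ‖b‖ ≤ M) :
    ‖a ^ n - b ^ n‖ ≤ ‖a - b‖ * M ^ (n - 1) := by
  have hM : 0 ≤ M := (norm_nonneg a).trans ha
  rw [← geom_sum₂_mul, norm_mul, mul_comm]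
  gcongr
  refine IsUltrametricDist.norm_sum_le_of_forall_le_of_nonneg (by positivity) fun i hi => ?_
  rw [norm_mul, norm_pow, norm_pow, ← pow_mul_pow_sub M (Nat.le_sub_one_of_lt (mem_range.mp hi))]
  gcongr

lemma norm_natCast_le_norm_sub_one_of_pow_eq_one {ζ : K} {d : ℕ} (hζd : ζ ^ d = 1)
    (hζ : ζ ≠ 1) : ‖(d : K)‖ ≤ ‖ζ - 1‖ := by
  rcases eq_or_ne d 0 with rfl | hd
  · simp
  have hζn : ‖ζ‖ = 1 := by
    rw [← pow_eq_one_iff_of_nonneg (norm_nonneg ζ) hd, ← norm_pow, hζd, norm_one]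
  have hsum : ∑ i ∈ range d, ζ ^ i = 0 := by
    have h := geom_sum_mul ζ d
    rw [hζd, sub_self] at h
    exact (mul_eq_zero.mp h).resolve_right (sub_ne_zero.mpr hζ)
  -- `d = ∑ (1 - ζ^i)`, and each `1 - ζ^i` is a multiple of `1 - ζ` by an integral element
  have hd_eq : (d : K) = ∑ i ∈ range d, (1 ^ i - ζ ^ i) := by
    simp [sum_sub_distrib, hsum]
  rw [hd_eq, norm_sub_rev]
  refine IsUltrametricDist.norm_sum_le_of_forall_le_of_nonneg (norm_nonneg _) fun i _ => ?_
  simpa using norm_pow_sub_pow_le 1 ζ i norm_one.le hζn.le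

lemma norm_le_norm_sub_of_pow_eq_pow {d : ℕ} (hd : ‖(d : K)‖ = 1) {y v : K}
    (h : y ^ d = v ^ d) (hne : y ≠ v) : ‖v‖ ≤ ‖y - v‖ := by
  rcases eq_or_ne v 0 with rfl | hv
  · simp
  have hζ := norm_natCast_le_norm_sub_one_of_pow_eq_one (ζ := y / v)
    (by rw [div_pow, h, div_self (pow_ne_zero d hv)])
    (fun h1 => hne ((div_eq_one_iff_eq hv).mp h1))
  rwa [hd, div_sub_one hv, norm_div, one_le_div (norm_pos_iff.mpr hv)] at hζ

end Ultrametric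

def unicritical {K : Type*} [Semiring K] (d : ℕ) (t : K) (z : K) : K := z ^ d + t

namespace unicritical

lemma sub_apply {K : Type*} [Ring K] (d : ℕ) (t a b : K) :
    unicritical d t a - unicritical d t b = a ^ d - b ^ d := by
  simp only [unicritical, add_sub_add_right_eq_sub]

variable {K : Type*} [NormedField K] [IsUltrametricDist K] {d : ℕ} {t : K}

local notation "Q" => unicritical d t

lemma norm_sub_apply_le {a b : K} {M : ℝ} (ha : ‖a‖ ≤ M) (hb : ‖b‖ ≤ M) :
    ‖Q a - Q b‖ ≤ ‖a - b‖ * M ^ (d - 1) := by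
  rw [sub_apply]
  exact norm_pow_sub_pow_le a b d ha hb

lemma norm_iterate_le_one (ht : ‖t‖ ≤ 1) {z : K} (hz : ‖z‖ ≤ 1) (n : ℕ) :
    ‖Q^[n] z‖ ≤ 1 := by
  induction n with
  | zero => exact hz
  | succ n ih =>
    rw [iterate_succ_apply']
    refine (IsUltrametricDist.norm_add_le_max _ _).trans (max_le ?_ ht)
    rw [norm_pow]
    exact pow_le_one₀ (norm_nonneg _) ih

lemma antitone_norm_iterate_sub (ht : ‖t‖ ≤ 1) {a b : K} (ha : ‖a‖ ≤ 1) (hb : ‖b‖ ≤ 1) :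
    Antitone fun n => ‖Q^[n] a - Q^[n] b‖ := by
  refine antitone_nat_of_succ_le fun n => ?_
  simpa only [iterate_succ_apply', one_pow, mul_one] using
    norm_sub_apply_le (norm_iterate_le_one ht ha n) (norm_iterate_le_one ht hb n)

lemma norm_iterate_of_one_lt_norm (hd : 2 ≤ d) {z : K} (hz : 1 < ‖z‖) (ht : ‖t‖ ≤ ‖z‖)
    (n : ℕ) : ‖Q^[n] z‖ = ‖z‖ ^ d ^ n := by
  induction n with
  | zero => simp
  | succ n ih =>
    have hlt : ‖t‖ < ‖(Q^[n] z) ^ d‖ := by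
      rw [norm_pow, ih, ← pow_mul, ← pow_succ]
      calc ‖t‖ ≤ ‖z‖ ^ 1 := by rwa [pow_one]
        _ < ‖z‖ ^ d ^ (n + 1) := pow_lt_pow_right₀ hz (Nat.one_lt_pow n.succ_ne_zero hd)
    rw [iterate_succ_apply', unicritical,
      IsUltrametricDist.norm_add_eq_max_of_norm_ne_norm hlt.ne', max_eq_left hlt.le,
      norm_pow, ih, ← pow_mul, ← pow_succ]

lemma iterate_injective_of_one_lt_norm (hd : 2 ≤ d) {z : K} (hz : 1 < ‖z‖)
    (ht : ‖t‖ ≤ ‖z‖) : Injective fun n => Q^[n] z := by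
  intro m n hmn
  have hnorm := congrArg norm hmn
  simp only [norm_iterate_of_one_lt_norm hd hz ht] at hnorm
  exact ((pow_right_strictMono₀ hz).comp (pow_right_strictMono₀ hd)).injective hnorm

lemma norm_le_one_of_finite_orbit_zero (hd : 2 ≤ d)
    (hfin : (Set.range fun n => Q^[n] 0).Finite) : ‖t‖ ≤ 1 := by
  by_contra! ht
  have hQ0 : Q 0 = t := by simp [unicritical, zero_pow (by omega : d ≠ 0)]
  obtain ⟨m, n, hmn, heq⟩ := hfin.exists_lt_map_eq_of_forall_mem
    (f := fun n => Q^[n + 1] 0) fun n => Set.mem_range_self (n + 1)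
  simp only [iterate_succ_apply, hQ0] at heq
  exact hmn.ne (iterate_injective_of_one_lt_norm hd ht le_rfl heq)

lemma norm_le_one_of_isPeriodicPt (hd : 2 ≤ d) (ht : ‖t‖ ≤ 1) {k : ℕ} (hk : 0 < k) {w : K}
    (hw : IsPeriodicPt Q k w) : ‖w‖ ≤ 1 := by
  by_contra! hw1
  exact hk.ne' (iterate_injective_of_one_lt_norm hd hw1 (ht.trans hw1.le) hw)

lemma exists_iterate_zero_eq_iterate_of_norm_lt_one (hd : 2 ≤ d) (ht : ‖t‖ ≤ 1)
    (hfin : (Set.range fun n => Q^[n] 0).Finite) {k : ℕ} (hk : 0 < k) {w : K}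
    (hw : IsPeriodicPt Q k w) (hw1 : ‖w‖ < 1) : ∃ n, Q^[n] 0 = Q^[n] w := by
  set δ : ℕ → ℝ := fun n => ‖Q^[n] 0 - Q^[n] w‖ with hδ
  have hanti : Antitone δ := antitone_norm_iterate_sub ht (by simp) hw1.le
  obtain ⟨i, j, hij, hQij⟩ := hfin.exists_lt_map_eq_of_forall_mem
    (f := fun j => Q^[j * k] 0) fun j => Set.mem_range_self (j * k)
  have hwk (j : ℕ) : Q^[j * k] w = w := hw.const_mul j
  have hδi : δ (i * k) ≤ ‖w‖ := by simpa [hδ] using hanti (Nat.zero_le (i * k))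
  have hQi : ‖Q^[i * k] 0‖ ≤ ‖w‖ := by
    rw [← sub_add_cancel (Q^[i * k] 0) w]
    exact (IsUltrametricDist.norm_add_le_max _ _).trans
      (max_le (by simpa [hδ, hwk] using hδi) le_rfl)
  -- near the cycle point `w`, `Q` contracts distances by the factor `‖w‖ < 1`
  have hcontract : δ (i * k + 1) ≤ ‖w‖ * δ (i * k) := by
    simp only [hδ, iterate_succ_apply', hwk]
    calc ‖Q (Q^[i * k] 0) - Q w‖ ≤ ‖Q^[i * k] 0 - w‖ * ‖w‖ ^ (d - 1) :=
          norm_sub_apply_le hQi le_rfl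
      _ ≤ ‖Q^[i * k] 0 - w‖ * ‖w‖ := by
          gcongr
          exact pow_le_of_le_one (norm_nonneg w) hw1.le (by omega)
      _ = ‖w‖ * ‖Q^[i * k] 0 - w‖ := mul_comm _ _
  have hreturn : δ (i * k) ≤ δ (i * k + 1) := by
    calc δ (i * k) = δ (j * k) := by simp only [hδ, hwk]; rw [hQij]
      _ ≤ δ (i * k + 1) := hanti (by nlinarith)
  refine ⟨i * k, sub_eq_zero.mp (norm_eq_zero.mp ?_)⟩
  nlinarith [norm_nonneg (Q^[i * k] 0 - Q^[i * k] w)]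

lemma iterate_zero_ne_iterate (hd : 2 ≤ d) (hdn : ‖(d : K)‖ = 1) (ht : ‖t‖ ≤ 1) {w : K}
    (hw0 : w ≠ 0) (hw1 : ‖w‖ < 1) (hmin : ∀ n, ‖w‖ ≤ ‖Q^[n] w‖) (n : ℕ) :
    Q^[n] 0 ≠ Q^[n] w := by
  have hanti := antitone_norm_iterate_sub (d := d) ht (norm_zero.trans_le zero_le_one) hw1.le
  have hδ1 : ‖Q 0 - Q w‖ = ‖w‖ ^ d := by
    rw [sub_apply, zero_pow (by omega), zero_sub, norm_neg, norm_pow]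
  induction n with
  | zero => exact hw0.symm
  | succ n ih =>
    intro heq
    rw [iterate_succ_apply', iterate_succ_apply', ← sub_eq_zero, sub_apply, sub_eq_zero] at heq
    have hcoll := norm_le_norm_sub_of_pow_eq_pow hdn heq ih
    rcases n with _ | n
    · simp only [iterate_zero, id_eq, zero_pow (by omega : d ≠ 0)] at heq
      exact hw0 (pow_eq_zero_iff (n := d) (by omega) |>.mp heq.symm)
    · have hle := hanti (Nat.succ_le_succ (Nat.zero_le n))
      simp only [iterate_one] at hle
      have hlt : ‖w‖ ^ d < ‖w‖ := pow_lt_self_of_lt_one₀ (norm_pos_iff.mpr hw0) hw1 (by omega)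
      linarith [hmin (n + 1)]

lemma norm_iterate_eq_one_of_isPeriodicPt (hd : 2 ≤ d) (hdn : ‖(d : K)‖ = 1)
    (hfin : (Set.range fun n => Q^[n] 0).Finite) {k : ℕ} (hk : 0 < k) {w : K}
    (hw : IsPeriodicPt Q k w) (hw0 : ∀ n, Q^[n] w ≠ 0) (n : ℕ) : ‖Q^[n] w‖ = 1 := by
  have ht := norm_le_one_of_finite_orbit_zero hd hfin
  obtain ⟨i₀, -, hi₀⟩ :=
    (range k).exists_min_image (fun i => ‖Q^[i] w‖) (nonempty_range_iff.mpr hk.ne')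
  set w' := Q^[i₀] w
  have hlow (n : ℕ) : ‖w'‖ ≤ ‖Q^[n] w‖ := by
    rw [← hw.iterate_mod_apply]
    exact hi₀ _ (mem_range.mpr (Nat.mod_lt n hk))
  refine le_antisymm (norm_iterate_le_one ht (norm_le_one_of_isPeriodicPt hd ht hk hw) n) ?_
  refine le_trans ?_ (hlow n)
  by_contra! hw'1
  obtain ⟨m, hm⟩ :=
    exists_iterate_zero_eq_iterate_of_norm_lt_one hd ht hfin hk (hw.apply_iterate i₀) hw'1
  refine iterate_zero_ne_iterate hd hdn ht (hw0 i₀) hw'1 (fun n => ?_) m hm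
  rw [← iterate_add_apply]
  exact hlow _

end unicritical

theorem stmt13_general (K : Type*) [NormedField K]
    (hna : IsNonarchimedean (fun x : K => ‖x‖))
    (d : ℕ) (hd : 2 ≤ d) (t : K)
    (hfin : (Set.range fun n : ℕ => (fun z : K => z ^ d + t)^[n] 0).Finite)
    (w : K) (k : ℕ) (hk : 1 ≤ k) (hw : (fun z : K => z ^ d + t)^[k] w = w)
    (lam : K)
    (hlam : lam = ∏ i ∈ Finset.range k, (d : K) * ((fun z : K => z ^ d + t)^[i] w) ^ (d - 1))
    (hne : lam ≠ 0) :
    (‖(d : K)‖ < 1 → ‖lam‖ < 1) ∧ (‖(d : K)‖ = 1 → ‖lam‖ = 1) := by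
  have : IsUltrametricDist K := .isUltrametricDist_of_isNonarchimedean_norm hna
  change (Set.range fun n => (unicritical d t)^[n] 0).Finite at hfin
  change IsPeriodicPt (unicritical d t) k w at hw
  change lam = ∏ i ∈ range k, (d : K) * ((unicritical d t)^[i] w) ^ (d - 1) at hlam
  have hnorm : ‖lam‖ = ∏ i ∈ range k, ‖(d : K)‖ * ‖(unicritical d t)^[i] w‖ ^ (d - 1) := by
    simp only [hlam, norm_prod, norm_mul, norm_pow]
  refine ⟨fun hdlt => ?_, fun hdn => ?_⟩
  · have ht := unicritical.norm_le_one_of_finite_orbit_zero hd hfin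
    have hw1 := unicritical.norm_le_one_of_isPeriodicPt hd ht hk hw
    calc ‖lam‖ ≤ ∏ _i ∈ range k, ‖(d : K)‖ := by
          rw [hnorm]
          gcongr with i
          exact mul_le_of_le_one_right (norm_nonneg _)
            (pow_le_one₀ (norm_nonneg _) (unicritical.norm_iterate_le_one ht hw1 i))
      _ = ‖(d : K)‖ ^ k := by rw [prod_const, card_range]
      _ < 1 := pow_lt_one₀ (norm_nonneg _) hdlt (by omega)
  · have hw0 (n : ℕ) : (unicritical d t)^[n] w ≠ 0 := by
      intro h0
      refine hne (hlam ▸ prod_eq_zero (mem_range.mpr (Nat.mod_lt n hk)) ?_)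
      rw [hw.iterate_mod_apply, h0, zero_pow (by omega), mul_zero]
    rw [hnorm]
    simp [hdn, unicritical.norm_iterate_eq_one_of_isPeriodicPt hd hdn hfin hk hw hw0]

/-- Multipliers of periodic orbits of a post-critically finite unicritical polynomial
`Q(z) = z^d + t` over a complete algebraically closed nonarchimedean field of
characteristic zero: if the residual characteristic divides `d` (i.e. `|d| < 1`) then
`|λ| < 1`, and if it is prime to `d` (i.e. `|d| = 1`) then `|λ| = 1`. -/
theorem stmt13 (K : Type*) [NormedField K] [CompleteSpace K] [IsAlgClosed K] [CharZero K]
    (hna : IsNonarchimedean (fun x : K => ‖x‖))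
    (hnontriv : ∃ x : K, ‖x‖ ≠ 0 ∧ ‖x‖ ≠ 1)
    (d : ℕ) (hd : 2 ≤ d) (t : K)
    (hfin : (Set.range fun n : ℕ => (fun z : K => z ^ d + t)^[n] 0).Finite)
    (w : K) (k : ℕ) (hk : 1 ≤ k) (hw : (fun z : K => z ^ d + t)^[k] w = w)
    (lam : K)
    (hlam : lam = ∏ i ∈ Finset.range k, (d : K) * ((fun z : K => z ^ d + t)^[i] w) ^ (d - 1))
    (hne : lam ≠ 0) :
    (‖(d : K)‖ < 1 → ‖lam‖ < 1) ∧ (‖(d : K)‖ = 1 → ‖lam‖ = 1) :=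
  stmt13_general K hna d hd t hfin w k hk hw lam hlam hne
end

section
/- Let (c,a) ∈ ℂ², let m ≥ 0 and k ≥ 1 be integers, let ζ ∈ ℂ satisfy ζ^{3^k − 1} = 1, and set Q(z) = ζ·P_{c,a}^m(z) + (1−ζ)·c/2. If Q ∘ P_{c,a}^k = P_{c,a}^k ∘ Q, then Q(Crit(P_{c,a}^{k+m})) = Q(Crit(P_{c,a}^m)) ∪ Crit(P_{c,a}^k), where Crit(f) = {z ∈ ℂ : f'(z) = 0}. -/
open Function Set

theorem Function.Commute.of_comp_right_of_surjective {α : Type*} {f g h : α → α}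
    (hg : Surjective g) (hfg : Function.Commute f g) (hfhg : Function.Commute f (h ∘ g)) :
    Function.Commute f h := by
  intro w
  obtain ⟨z, rfl⟩ := hg w
  exact (hfhg z).trans (congrArg h (hfg z).symm)

section Deriv

variable {𝕜 : Type*} [NontriviallyNormedField 𝕜] {f g : 𝕜 → 𝕜}

theorem setOf_deriv_comp_eq_zero (hf : Differentiable 𝕜 f) (hg : Differentiable 𝕜 g) :
    {z | deriv (f ∘ g) z = 0} = {z | deriv g z = 0} ∪ g ⁻¹' {w | deriv f w = 0} := by
  ext z
  simp [deriv_comp z (hf _) (hg _), or_comm]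

theorem deriv_affine_eq_of_commute (hf : Differentiable 𝕜 f) {ζ b : 𝕜} (hζ : ζ ≠ 0)
    (hcomm : Function.Commute f (fun w => ζ * w + b)) (w : 𝕜) :
    deriv f (ζ * w + b) = deriv f w := by
  have hL : HasDerivAt (fun w => ζ * w + b) ζ w := by
    simpa using ((hasDerivAt_id w).const_mul ζ).add_const b
  have h₁ : HasDerivAt (f ∘ fun w => ζ * w + b) (deriv f (ζ * w + b) * ζ) w :=
    (hf _).hasDerivAt.comp w hL
  have h₂ : HasDerivAt ((fun w => ζ * w + b) ∘ f) (ζ * deriv f w) w :=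
    ((hf w).hasDerivAt.const_mul ζ).add_const b
  rw [hcomm.comp_eq] at h₁
  exact mul_right_cancel₀ hζ ((h₁.unique h₂).trans (mul_comm _ _))

end Deriv

theorem differentiable_P (c a : ℂ) : Differentiable ℂ (P c a) := by
  unfold P
  fun_prop

theorem surjective_P (c a : ℂ) : Surjective (P c a) := by
  open Polynomial in
  let p : ℂ[X] := C (1 / 3) * X ^ 3 - C (c / 2) * X ^ 2 + C (a ^ 3)
  have hP : P c a = p.eval := by
    ext z
    simp [p, P, div_eq_inv_mul]
  have hdeg : p.natDegree = 3 := by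
    simp only [p]
    compute_degree!
  rw [hP]
  exact IsAlgClosed.eval_surjective (by rw [hdeg]; norm_num)

/-- If `Q(z) = ζ P_{c,a}^m(z) + (1−ζ)c/2` with `ζ^{3^k−1} = 1` commutes with
`P_{c,a}^k`, then `Q(Crit(P^{k+m})) = Q(Crit(P^m)) ∪ Crit(P^k)`, where
`Crit(f) = {z : f'(z) = 0}`. -/
theorem stmt15 (c a : ℂ) (m k : ℕ) (hk : 1 ≤ k) (ζ : ℂ)
    (hζ : ζ ^ (3 ^ k - 1) = 1)
    (Q : ℂ → ℂ) (hQ : Q = fun z => ζ * (P c a)^[m] z + (1 - ζ) * c / 2)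
    (hcomm : Q ∘ (P c a)^[k] = (P c a)^[k] ∘ Q) :
    Q '' {z : ℂ | deriv ((P c a)^[k + m]) z = 0} =
      Q '' {z : ℂ | deriv ((P c a)^[m]) z = 0} ∪ {z : ℂ | deriv ((P c a)^[k]) z = 0} := by
  have hζ0 : ζ ≠ 0 := by
    rintro rfl
    have hpos : 0 < 3 ^ k - 1 := Nat.sub_pos_of_lt (Nat.one_lt_pow (by omega) (by norm_num))
    simp [zero_pow hpos.ne'] at hζ
  set L : ℂ → ℂ := fun w => ζ * w + (1 - ζ) * c / 2
  have hQL : Q = L ∘ (P c a)^[m] := hQ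
  have hL_surj : Surjective L := fun w =>
    ⟨(w - (1 - ζ) * c / 2) / ζ, by simp only [L]; field_simp; ring⟩
  have hPm_surj := (surjective_P c a).iterate m
  have hPk := (differentiable_P c a).iterate k
  have hLcomm : Function.Commute ((P c a)^[k]) L :=
    .of_comp_right_of_surjective hPm_surj (.iterate_iterate_self (P c a) k m)
      (hQL ▸ semiconj_iff_comp_eq.2 hcomm.symm)
  have hcrit : L ⁻¹' {w | deriv ((P c a)^[k]) w = 0} = {w | deriv ((P c a)^[k]) w = 0} := by
    ext w
    simp [L, deriv_affine_eq_of_commute hPk hζ0 hLcomm]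
  rw [iterate_add, setOf_deriv_comp_eq_zero hPk ((differentiable_P c a).iterate m), image_union,
    hQL, image_comp L _ (_ ⁻¹' _), image_preimage_eq _ hPm_surj, ← hcrit,
    image_preimage_eq _ hL_surj, hcrit]
end

section
/- For every integer q ≥ 0, Z(q,0,−1) = {(c,a) ∈ ℂ² : 12a³ − c³ − 6c = 0}; and for every m ≥ 1 and q ≥ 0, the set Z(q,m,−1) is finite. In particular, Z(q,m,−1) is infinite if and only if m = 0. -/
/-- `Z(q,m,ζ)` is the set of `(c,a) ∈ ℂ²` such that
`Q_{c,a}(z) = ζ P_{c,a}^m(z) + (1−ζ)c/2` commutes with `P_{c,a}^k` for every `k ≥ 1`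
with `ζ^{3^k} = ζ`, and `Q_{c,a}(P_{c,a}^q(c₀)) = P_{c,a}^q(c₁)` or
`Q_{c,a}(P_{c,a}^q(c₁)) = P_{c,a}^q(c₀)` (with `c₀ = 0`, `c₁ = c`). -/
def Zset (q m : ℕ) (ζ : ℂ) : Set (ℂ × ℂ) :=
  {p : ℂ × ℂ |
    (∀ k : ℕ, 1 ≤ k → ζ ^ (3 ^ k) = ζ → ∀ z : ℂ,
      ζ * (P p.1 p.2)^[m] ((P p.1 p.2)^[k] z) + (1 - ζ) * p.1 / 2 =
        (P p.1 p.2)^[k] (ζ * (P p.1 p.2)^[m] z + (1 - ζ) * p.1 / 2)) ∧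
    (ζ * (P p.1 p.2)^[m] ((P p.1 p.2)^[q] 0) + (1 - ζ) * p.1 / 2 = (P p.1 p.2)^[q] p.1 ∨
     ζ * (P p.1 p.2)^[m] ((P p.1 p.2)^[q] p.1) + (1 - ζ) * p.1 / 2 = (P p.1 p.2)^[q] 0)}

/-!
For `ζ = -1` the map `Q` is `z ↦ c - P^m z`. Since `P (c - z) = 2a³ - c³/6 - P z`, the reflection
`z ↦ c - z` commutes with `P` exactly on the curve `12a³ = c³ + 6c`; there `Q` commutes with every
iterate of `P`, and either critical relation becomes `P^(m+q) 0 = P^q 0`. On the curve, `P^n 0` is a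
polynomial in `c` of degree `3^n` for `n ≥ 1`, so for `m ≥ 1` this relation leaves finitely many `c`,
each with at most three `a`.
-/

open Polynomial

section Reflection

variable {c a : ℂ}

theorem P_reflect (c a z : ℂ) : P c a (c - z) = 2 * a ^ 3 - c ^ 3 / 6 - P c a z := by
  unfold P; ring

theorem commute_P_reflect (h : 12 * a ^ 3 - c ^ 3 - 6 * c = 0) :
    Function.Commute (P c a) (c - ·) := fun z => by
  rw [P_reflect]; linear_combination h / 6

theorem iterate_P_reflect (h : 12 * a ^ 3 - c ^ 3 - 6 * c = 0) (n : ℕ) (z : ℂ) :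
    (P c a)^[n] (c - z) = c - (P c a)^[n] z :=
  (commute_P_reflect h).iterate_left n z

theorem mem_Zset_neg_one_iff {q m : ℕ} :
    (c, a) ∈ Zset q m (-1) ↔
      12 * a ^ 3 - c ^ 3 - 6 * c = 0 ∧ (P c a)^[m + q] 0 = (P c a)^[q] 0 := by
  have hQ (x : ℂ) : -1 * x + (1 - -1) * c / 2 = c - x := by ring
  simp only [Zset, Set.mem_ofPred_eq, hQ]
  constructor
  · rintro ⟨hcomm, hcrit⟩
    have hcurve : 12 * a ^ 3 - c ^ 3 - 6 * c = 0 := by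
      have h1 := hcomm 1 le_rfl (by norm_num) 0
      rw [Function.iterate_one, P_reflect, ← Function.iterate_succ_apply,
        Function.iterate_succ_apply'] at h1
      linear_combination -6 * h1
    have horbit := iterate_P_reflect hcurve q 0
    rw [sub_zero] at horbit
    refine ⟨hcurve, ?_⟩
    rcases hcrit with hcrit | hcrit
    · rw [← Function.iterate_add_apply, horbit] at hcrit
      linear_combination -hcrit
    · rw [horbit, iterate_P_reflect hcurve, ← Function.iterate_add_apply] at hcrit
      linear_combination hcrit
  · rintro ⟨hcurve, horbit⟩
    refine ⟨fun k _ _ z => ?_, Or.inl ?_⟩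
    · rw [iterate_P_reflect hcurve, Function.Commute.iterate_iterate_self]
    · rw [← Function.iterate_add_apply, horbit, ← iterate_P_reflect hcurve, sub_zero]

end Reflection

/-- `P` on the curve, with `a³` replaced by `(c³ + 6c)/12`, acting on polynomials in `c`. -/
noncomputable def curveP (t : ℂ[X]) : ℂ[X] :=
  C (1 / 3) * t ^ 3 - C (1 / 2) * X * t ^ 2 + (C (1 / 12) * X ^ 3 + C (1 / 2) * X)

noncomputable def orbitPoly (n : ℕ) : ℂ[X] := curveP^[n] 0

theorem eval_curveP {c a : ℂ} (h : 12 * a ^ 3 - c ^ 3 - 6 * c = 0) (t : ℂ[X]) :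
    (curveP t).eval c = P c a (t.eval c) := by
  simp only [curveP, P, eval_add, eval_sub, eval_mul, eval_pow, eval_C, eval_X]
  linear_combination -h / 12

theorem eval_orbitPoly {c a : ℂ} (h : 12 * a ^ 3 - c ^ 3 - 6 * c = 0) (n : ℕ) :
    (orbitPoly n).eval c = (P c a)^[n] 0 := by
  have hsemiconj : Function.Semiconj (eval c) curveP (P c a) := eval_curveP h
  rw [orbitPoly, hsemiconj.iterate_right n, eval_zero]

theorem natDegree_curveP {t : ℂ[X]} (ht : 2 ≤ t.natDegree) :
    (curveP t).natDegree = 3 * t.natDegree := by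
  have hlead : (C (1 / 3 : ℂ) * t ^ 3).natDegree = 3 * t.natDegree := by
    rw [natDegree_C_mul (by norm_num), natDegree_pow, mul_comm]
  have htail : (-(C (1 / 2 : ℂ) * X * t ^ 2) + (C (1 / 12) * X ^ 3 + C (1 / 2) * X)).natDegree
      ≤ 3 * t.natDegree - 1 := by
    compute_degree
    omega
  rw [curveP, sub_eq_add_neg, add_assoc, natDegree_add_eq_left_of_natDegree_lt (by omega), hlead]

theorem natDegree_orbitPoly {n : ℕ} (hn : 1 ≤ n) : (orbitPoly n).natDegree = 3 ^ n := by
  induction n, hn using Nat.le_induction with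
  | base =>
    rw [orbitPoly, Function.iterate_one, curveP]
    compute_degree!
  | succ n hn ih =>
    have h3 : 3 ≤ 3 ^ n := by simpa using Nat.pow_le_pow_right (by norm_num : 0 < 3) hn
    rw [orbitPoly, Function.iterate_succ_apply', ← orbitPoly, natDegree_curveP (by omega), ih,
      pow_succ, mul_comm]

theorem orbitPoly_add_sub_ne_zero {q m : ℕ} (hm : 1 ≤ m) : orbitPoly (m + q) - orbitPoly q ≠ 0 := by
  intro h
  have hdeg := congrArg natDegree (sub_eq_zero.mp h)
  rw [natDegree_orbitPoly (by omega)] at hdeg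
  rcases Nat.eq_zero_or_pos q with rfl | hq
  · simp [orbitPoly] at hdeg
  · rw [natDegree_orbitPoly hq] at hdeg
    have := Nat.pow_right_injective (by norm_num : 2 ≤ 3) hdeg
    omega

theorem finite_curve_inter_fst_mem {S : Set ℂ} (hS : S.Finite) :
    {p : ℂ × ℂ | 12 * p.2 ^ 3 - p.1 ^ 3 - 6 * p.1 = 0 ∧ p.1 ∈ S}.Finite := by
  have hcube (b : ℂ) : ((· ^ 3) ⁻¹' {b} : Set ℂ).Finite :=
    (nthRootsFinset 3 b).finite_toSet.subset fun x hx => (mem_nthRootsFinset (by norm_num) b).2 hx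
  refine (hS.prod ((hS.image fun c => (c ^ 3 + 6 * c) / 12).preimage' fun b _ => hcube b)).subset ?_
  rintro ⟨c, a⟩ ⟨hcurve, hc⟩
  exact ⟨hc, c, hc, by linear_combination -hcurve / 12⟩

theorem Zset_neg_one_finite (q m : ℕ) (hm : 1 ≤ m) : (Zset q m (-1)).Finite := by
  refine (finite_curve_inter_fst_mem
    (finite_setOfPred_isRoot (orbitPoly_add_sub_ne_zero (q := q) hm))).subset ?_
  rintro ⟨c, a⟩ hp
  obtain ⟨hcurve, horbit⟩ := mem_Zset_neg_one_iff.mp hp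
  refine ⟨hcurve, ?_⟩
  simp only [Set.mem_ofPred_eq, IsRoot, eval_sub, eval_orbitPoly hcurve, horbit, sub_self]

theorem curve_infinite : {p : ℂ × ℂ | 12 * p.2 ^ 3 - p.1 ^ 3 - 6 * p.1 = 0}.Infinite := by
  refine Set.Infinite.of_image Prod.fst (Set.infinite_univ.mono fun c _ => ?_)
  obtain ⟨a, ha⟩ := IsAlgClosed.exists_pow_nat_eq ((c ^ 3 + 6 * c) / 12) (by norm_num : 0 < 3)
  exact ⟨(c, a), by simp only [Set.mem_ofPred_eq, ha]; ring, rfl⟩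

/-- `Z(q,0,−1)` is the curve `{12a³ − c³ − 6c = 0}` for every `q ≥ 0`, `Z(q,m,−1)` is
finite for every `m ≥ 1`, and `Z(q,m,−1)` is infinite iff `m = 0`. -/
theorem stmt16 :
    (∀ q : ℕ, Zset q 0 (-1) = {p : ℂ × ℂ | 12 * p.2 ^ 3 - p.1 ^ 3 - 6 * p.1 = 0}) ∧
    (∀ q m : ℕ, 1 ≤ m → (Zset q m (-1)).Finite) ∧
    (∀ q m : ℕ, (Zset q m (-1)).Infinite ↔ m = 0) := by
  have hZ0 (q : ℕ) : Zset q 0 (-1) = {p : ℂ × ℂ | 12 * p.2 ^ 3 - p.1 ^ 3 - 6 * p.1 = 0} := by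
    ext ⟨c, a⟩
    simp [mem_Zset_neg_one_iff]
  refine ⟨hZ0, Zset_neg_one_finite, fun q m => ⟨fun hinf => ?_, ?_⟩⟩
  · by_contra hm
    exact hinf (Zset_neg_one_finite q m (Nat.one_le_iff_ne_zero.mpr hm))
  · rintro rfl
    rw [hZ0]
    exact curve_infinite
end

section
/- For (c,a) ∈ ℂ², the affine map Q_c(z) = −z + c commutes with P_{c,a} (i.e. Q_c ∘ P_{c,a} = P_{c,a} ∘ Q_c as polynomials) if and only if 12a³ − c³ − 6c = 0. -/
/-- The affine map `Q_c(z) = −z + c` commutes with `P_{c,a}` iff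
`12a³ − c³ − 6c = 0`. -/
theorem stmt18 (c a : ℂ) :
    (∀ z : ℂ, -(P c a z) + c = P c a (-z + c)) ↔ 12 * a ^ 3 - c ^ 3 - 6 * c = 0 := by
  simp only [P]
  constructor
  · intro h
    have h0 := h 0
    linear_combination -6 * h0
  · intro h z
    linear_combination -h / 6
end
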